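/- arXiv:0808.3577 — 5 statements merged into one kernel-verified Lean document; each statement's English description precedes it below -/
import Mathlib

section
/- Suppose a smooth ζ : Ω → ℝ satisfies the determining equation DE₀ on Ω ⊆ ℝ³. Let I, J ⊆ ℝ be open intervals, x₀ ∈ J, and let u : I × J → ℝ be smooth with (t,x,u(t,x)) ∈ Ω for all (t,x), with ∂_x u(t,x) = ζ(t,x,u(t,x)) on all of I × J, and with ∂_t u(t,x₀) = H̃[ζ](t,x₀,u(t,x₀)) for all t ∈ I. Then ∂_t u(t,x) = H̃[ζ](t,x,u(t,x)) on all of I × J, and consequently u solves the evolution equation u_t = H(t,x,u,∂_x u,…,∂_x^r u) on I × J. -/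
open scoped Topology

/-- Partial derivative in `t` (the first coordinate) of a function of `(t,x,u)`. -/
noncomputable def pdt (f : ℝ × ℝ × ℝ → ℝ) (p : ℝ × ℝ × ℝ) : ℝ :=
  deriv (fun s => f (s, p.2.1, p.2.2)) p.1

/-- Partial derivative in `x` (the second coordinate) of a function of `(t,x,u)`. -/
noncomputable def pdx (f : ℝ × ℝ × ℝ → ℝ) (p : ℝ × ℝ × ℝ) : ℝ :=
  deriv (fun s => f (p.1, s, p.2.2)) p.2.1

/-- Partial derivative in `u` (the third coordinate) of a function of `(t,x,u)`. -/
noncomputable def pdu (f : ℝ × ℝ × ℝ → ℝ) (p : ℝ × ℝ × ℝ) : ℝ :=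
  deriv (fun s => f (p.1, p.2.1, s)) p.2.2

/-- Iterates of the derivation `D = ∂ₓ + ζ∂ᵤ` applied to `ζ`. -/
noncomputable def Dit (ζ : ℝ × ℝ × ℝ → ℝ) : ℕ → ℝ × ℝ × ℝ → ℝ
  | 0 => ζ
  | j + 1 => fun p => pdx (Dit ζ j) p + ζ p * pdu (Dit ζ j) p

/-- `H̃[ζ](t,x,u) = H(t,x,u,ζ,(Dζ),…,(D^{r−1}ζ))(t,x,u)`. -/
noncomputable def Htil (r : ℕ) (H : ℝ → ℝ → (Fin (r + 1) → ℝ) → ℝ)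
    (ζ : ℝ × ℝ × ℝ → ℝ) (p : ℝ × ℝ × ℝ) : ℝ :=
  H p.1 p.2.1 (fun i => if i.val = 0 then p.2.2 else Dit ζ (i.val - 1) p)

/-! ### Auxiliary lemmas -/

section Aux

lemma curve3_t (a b c : ℝ) : HasDerivAt (fun s : ℝ => (s, b, c)) ((1:ℝ),(0:ℝ),(0:ℝ)) a :=
  (hasDerivAt_id a).prodMk ((hasDerivAt_const a b).prodMk (hasDerivAt_const a c))

lemma curve3_x (a b c : ℝ) : HasDerivAt (fun s : ℝ => (a, s, c)) ((0:ℝ),(1:ℝ),(0:ℝ)) b :=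
  (hasDerivAt_const b a).prodMk ((hasDerivAt_id b).prodMk (hasDerivAt_const b c))

lemma curve3_u (a b c : ℝ) : HasDerivAt (fun s : ℝ => (a, b, s)) ((0:ℝ),(0:ℝ),(1:ℝ)) c :=
  (hasDerivAt_const c a).prodMk ((hasDerivAt_const c b).prodMk (hasDerivAt_id c))

lemma pdt_eq {f : ℝ × ℝ × ℝ → ℝ} {p : ℝ × ℝ × ℝ} (hf : DifferentiableAt ℝ f p) :
    pdt f p = fderiv ℝ f p (1,0,0) :=
  (hf.hasFDerivAt.comp_hasDerivAt p.1 (curve3_t p.1 p.2.1 p.2.2)).deriv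

lemma pdx_eq {f : ℝ × ℝ × ℝ → ℝ} {p : ℝ × ℝ × ℝ} (hf : DifferentiableAt ℝ f p) :
    pdx f p = fderiv ℝ f p (0,1,0) :=
  (hf.hasFDerivAt.comp_hasDerivAt p.2.1 (curve3_x p.1 p.2.1 p.2.2)).deriv

lemma pdu_eq {f : ℝ × ℝ × ℝ → ℝ} {p : ℝ × ℝ × ℝ} (hf : DifferentiableAt ℝ f p) :
    pdu f p = fderiv ℝ f p (0,0,1) :=
  (hf.hasFDerivAt.comp_hasDerivAt p.2.2 (curve3_u p.1 p.2.1 p.2.2)).deriv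

/-- Chain rule in the `x` direction along a curve in the third coordinate. -/
lemma chain_x {f : ℝ × ℝ × ℝ → ℝ} {t x w w' : ℝ} (hf : DifferentiableAt ℝ f (t,x,w))
    {c : ℝ → ℝ} (hc : HasDerivAt c w' x) (hcx : c x = w) :
    HasDerivAt (fun s => f (t, s, c s)) (pdx f (t,x,w) + w' * pdu f (t,x,w)) x := by
  have hγ : HasDerivAt (fun s : ℝ => (t, s, c s) : ℝ → ℝ×ℝ×ℝ) ((0:ℝ),(1:ℝ),w') x :=
    (hasDerivAt_const x t).prodMk ((hasDerivAt_id x).prodMk hc)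
  subst hcx
  have h2 := hf.hasFDerivAt.comp_hasDerivAt x hγ
  refine h2.congr_deriv (Eq.symm ?_)
  have h3 : ((0:ℝ),(1:ℝ),w') = ((0:ℝ),(1:ℝ),(0:ℝ)) + w' • ((0:ℝ),(0:ℝ),(1:ℝ)) := by
    simp [Prod.ext_iff]
  rw [pdx_eq hf, pdu_eq hf, h3, map_add, map_smul]
  simp [smul_eq_mul]

/-- Chain rule in the `t` direction along a curve in the third coordinate. -/
lemma chain_t {f : ℝ × ℝ × ℝ → ℝ} {t x w w' : ℝ} (hf : DifferentiableAt ℝ f (t,x,w))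
    {c : ℝ → ℝ} (hc : HasDerivAt c w' t) (hcx : c t = w) :
    HasDerivAt (fun s => f (s, x, c s)) (pdt f (t,x,w) + w' * pdu f (t,x,w)) t := by
  have hγ : HasDerivAt (fun s : ℝ => (s, x, c s) : ℝ → ℝ×ℝ×ℝ) ((1:ℝ),(0:ℝ),w') t :=
    (hasDerivAt_id t).prodMk ((hasDerivAt_const t x).prodMk hc)
  subst hcx
  have h2 := hf.hasFDerivAt.comp_hasDerivAt t hγ
  refine h2.congr_deriv (Eq.symm ?_)
  have h3 : ((1:ℝ),(0:ℝ),w') = ((1:ℝ),(0:ℝ),(0:ℝ)) + w' • ((0:ℝ),(0:ℝ),(1:ℝ)) := by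
    simp [Prod.ext_iff]
  rw [pdt_eq hf, pdu_eq hf, h3, map_add, map_smul]
  simp [smul_eq_mul]

lemma fderiv_apply_smooth {E : Type*} [NormedAddCommGroup E] [NormedSpace ℝ E]
    {f : E → ℝ} {s : Set E} (hf : ContDiffOn ℝ (⊤ : ℕ∞) f s) (hs : IsOpen s) (v : E) :
    ContDiffOn ℝ (⊤ : ℕ∞) (fun p => fderiv ℝ f p v) s :=
  (hf.fderiv_of_isOpen hs (by simp)).clm_apply contDiffOn_const

lemma diffAt_of_contDiffOn {E : Type*} [NormedAddCommGroup E] [NormedSpace ℝ E]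
    {f : E → ℝ} {s : Set E} (hf : ContDiffOn ℝ (⊤ : ℕ∞) f s) (hs : IsOpen s) {p : E} (hp : p ∈ s) :
    DifferentiableAt ℝ f p :=
  (hf.contDiffAt (hs.mem_nhds hp)).differentiableAt (by simp)

lemma pdx_smooth {f : ℝ × ℝ × ℝ → ℝ} {s : Set (ℝ×ℝ×ℝ)} (hf : ContDiffOn ℝ (⊤ : ℕ∞) f s)
    (hs : IsOpen s) : ContDiffOn ℝ (⊤ : ℕ∞) (pdx f) s :=
  (fderiv_apply_smooth hf hs ((0:ℝ),(1:ℝ),(0:ℝ))).congr fun _ hp =>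
    pdx_eq (diffAt_of_contDiffOn hf hs hp)

lemma pdu_smooth {f : ℝ × ℝ × ℝ → ℝ} {s : Set (ℝ×ℝ×ℝ)} (hf : ContDiffOn ℝ (⊤ : ℕ∞) f s)
    (hs : IsOpen s) : ContDiffOn ℝ (⊤ : ℕ∞) (pdu f) s :=
  (fderiv_apply_smooth hf hs ((0:ℝ),(0:ℝ),(1:ℝ))).congr fun _ hp =>
    pdu_eq (diffAt_of_contDiffOn hf hs hp)

lemma Dit_smooth {ζ : ℝ × ℝ × ℝ → ℝ} {s : Set (ℝ×ℝ×ℝ)} (hζ : ContDiffOn ℝ (⊤ : ℕ∞) ζ s)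
    (hs : IsOpen s) : ∀ j, ContDiffOn ℝ (⊤ : ℕ∞) (Dit ζ j) s := by
  intro j
  induction j with
  | zero => exact hζ
  | succ j ih => exact (pdx_smooth ih hs).add (hζ.mul (pdu_smooth ih hs))

lemma Htil_smooth {r : ℕ} {H : ℝ → ℝ → (Fin (r + 1) → ℝ) → ℝ}
    (hH : ContDiff ℝ (⊤ : ℕ∞) fun q : ℝ × ℝ × (Fin (r + 1) → ℝ) => H q.1 q.2.1 q.2.2)
    {ζ : ℝ × ℝ × ℝ → ℝ} {s : Set (ℝ×ℝ×ℝ)} (hζ : ContDiffOn ℝ (⊤ : ℕ∞) ζ s) (hs : IsOpen s) :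
    ContDiffOn ℝ (⊤ : ℕ∞) (Htil r H ζ) s := by
  have hinner : ContDiffOn ℝ (⊤ : ℕ∞)
      (fun p : ℝ×ℝ×ℝ => (p.1, p.2.1, fun i : Fin (r+1) =>
        if i.val = 0 then p.2.2 else Dit ζ (i.val - 1) p) :
        ℝ×ℝ×ℝ → ℝ × ℝ × (Fin (r+1) → ℝ)) s := by
    refine contDiffOn_fst.prodMk (ContDiffOn.prodMk ?_ ?_)
    · exact (contDiff_fst.comp contDiff_snd).contDiffOn
    · refine contDiffOn_pi.2 fun i => ?_
      rcases eq_or_ne i.val 0 with h | h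
      · simp only [h, if_true]
        exact (contDiff_snd.comp contDiff_snd).contDiffOn
      · simp only [h, if_false]
        exact Dit_smooth hζ hs _
  exact hH.comp_contDiffOn hinner

lemma hasDerivAt2_t {u : ℝ × ℝ → ℝ} {S : Set (ℝ×ℝ)} (hu : ContDiffOn ℝ (⊤ : ℕ∞) u S)
    (hS : IsOpen S) {q : ℝ × ℝ} (hq : q ∈ S) :
    HasDerivAt (fun s => u (s, q.2)) (fderiv ℝ u q ((1:ℝ),(0:ℝ))) q.1 :=
  (diffAt_of_contDiffOn hu hS hq).hasFDerivAt.comp_hasDerivAt q.1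
    ((hasDerivAt_id q.1).prodMk (hasDerivAt_const q.1 q.2))

lemma hasDerivAt2_x {u : ℝ × ℝ → ℝ} {S : Set (ℝ×ℝ)} (hu : ContDiffOn ℝ (⊤ : ℕ∞) u S)
    (hS : IsOpen S) {q : ℝ × ℝ} (hq : q ∈ S) :
    HasDerivAt (fun s => u (q.1, s)) (fderiv ℝ u q ((0:ℝ),(1:ℝ))) q.2 :=
  (diffAt_of_contDiffOn hu hS hq).hasFDerivAt.comp_hasDerivAt q.2
    ((hasDerivAt_const q.2 q.1).prodMk (hasDerivAt_id q.2))

lemma hasDerivAt_W_x {u : ℝ × ℝ → ℝ} {S : Set (ℝ×ℝ)} (hu : ContDiffOn ℝ (⊤ : ℕ∞) u S)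
    (hS : IsOpen S) (v : ℝ × ℝ) {q : ℝ × ℝ} (hq : q ∈ S) :
    HasDerivAt (fun s => fderiv ℝ u (q.1, s) v)
      (fderiv ℝ (fderiv ℝ u) q ((0:ℝ),(1:ℝ)) v) q.2 := by
  have hd2 : DifferentiableAt ℝ (fderiv ℝ u) q :=
    ((hu.fderiv_of_isOpen (m := 1) hS (WithTop.coe_le_coe.2 le_top)).contDiffAt (hS.mem_nhds hq)).differentiableAt one_ne_zero
  have h1 : HasDerivAt (fun s => fderiv ℝ u (q.1, s))
      (fderiv ℝ (fderiv ℝ u) q ((0:ℝ),(1:ℝ))) q.2 :=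
    hd2.hasFDerivAt.comp_hasDerivAt q.2
      ((hasDerivAt_const q.2 q.1).prodMk (hasDerivAt_id q.2))
  exact (ContinuousLinearMap.apply ℝ ℝ v).hasFDerivAt.comp_hasDerivAt q.2 h1

lemma hasDerivAt_W_t {u : ℝ × ℝ → ℝ} {S : Set (ℝ×ℝ)} (hu : ContDiffOn ℝ (⊤ : ℕ∞) u S)
    (hS : IsOpen S) (v : ℝ × ℝ) {q : ℝ × ℝ} (hq : q ∈ S) :
    HasDerivAt (fun s => fderiv ℝ u (s, q.2) v)
      (fderiv ℝ (fderiv ℝ u) q ((1:ℝ),(0:ℝ)) v) q.1 := by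
  have hd2 : DifferentiableAt ℝ (fderiv ℝ u) q :=
    ((hu.fderiv_of_isOpen (m := 1) hS (WithTop.coe_le_coe.2 le_top)).contDiffAt (hS.mem_nhds hq)).differentiableAt one_ne_zero
  have h1 : HasDerivAt (fun s => fderiv ℝ u (s, q.2))
      (fderiv ℝ (fderiv ℝ u) q ((1:ℝ),(0:ℝ))) q.1 :=
    hd2.hasFDerivAt.comp_hasDerivAt q.1
      ((hasDerivAt_id q.1).prodMk (hasDerivAt_const q.1 q.2))
  exact (ContinuousLinearMap.apply ℝ ℝ v).hasFDerivAt.comp_hasDerivAt q.1 h1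

lemma snd_deriv_symm {u : ℝ × ℝ → ℝ} {S : Set (ℝ×ℝ)} (hu : ContDiffOn ℝ (⊤ : ℕ∞) u S)
    (hS : IsOpen S) {q : ℝ × ℝ} (hq : q ∈ S) (v w : ℝ × ℝ) :
    fderiv ℝ (fderiv ℝ u) q v w = fderiv ℝ (fderiv ℝ u) q w v :=
  ((hu.contDiffAt (hS.mem_nhds hq)).isSymmSndFDerivAt (by rw [minSmoothness_of_isRCLikeNormedField]; exact WithTop.coe_le_coe.2 le_top)) v w

/-- Uniqueness for the linear ODE `φ' = c φ` on a preconnected open set. -/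
lemma ode_zero {J : Set ℝ} (hJ : IsOpen J) (hJ' : IsPreconnected J) {φ c : ℝ → ℝ}
    (hc : ContinuousOn c J) (hφ : ∀ x ∈ J, HasDerivAt φ (c x * φ x) x)
    {x₀ : ℝ} (hx₀ : x₀ ∈ J) (h0 : φ x₀ = 0) : ∀ x ∈ J, φ x = 0 := by
  have hoc : J.OrdConnected := hJ'.ordConnected
  set A : ℝ → ℝ := fun x => ∫ s in x₀..x, c s with hA
  have hAd : ∀ x ∈ J, HasDerivAt A (c x) x := by
    intro x hx
    have hsub : Set.uIcc x₀ x ⊆ J := hoc.uIcc_subset hx₀ hx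
    refine intervalIntegral.integral_hasDerivAt_right
      ((hc.mono hsub).intervalIntegrable) ?_ (hc.continuousAt (hJ.mem_nhds hx))
    exact hc.stronglyMeasurableAtFilter hJ x hx
  set g : ℝ → ℝ := fun x => Real.exp (-A x) * φ x with hg
  have hgd : ∀ x ∈ J, HasDerivAt g 0 x := by
    intro x hx
    have h1 : HasDerivAt (fun y => Real.exp (-A y)) (Real.exp (-A x) * (-c x)) x :=
      ((hAd x hx).neg).exp
    have h2 := h1.mul (hφ x hx)
    refine h2.congr_deriv (Eq.symm ?_)
    ring
  have hgc : ContinuousOn g J := fun x hx => ((hgd x hx).continuousAt).continuousWithinAt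
  have key : ∀ a ∈ J, ∀ b ∈ J, a ≤ b → g b = g a := by
    intro a ha b hb hab
    have hsub : Set.Icc a b ⊆ J := by
      have := hoc.uIcc_subset ha hb
      rwa [Set.uIcc_of_le hab] at this
    exact constant_of_has_deriv_right_zero (hgc.mono hsub)
      (fun y hy => ((hgd y (hsub ⟨hy.1, hy.2.le⟩)).hasDerivWithinAt)) b ⟨hab, le_rfl⟩
  intro x hx
  have h1 : g x = g x₀ := by
    rcases le_total x₀ x with h | h
    · exact key x₀ hx₀ x hx h
    · exact (key x hx x₀ hx₀ h).symm
  have hgx₀ : g x₀ = 0 := by simp [hg, h0]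
  have h2 : Real.exp (-A x) * φ x = 0 := h1.trans hgx₀
  rcases mul_eq_zero.1 h2 with h | h
  · exact absurd h (Real.exp_ne_zero _)
  · exact h

end Aux

/-- If `ζ` solves DE₀, `u` satisfies the invariant surface condition on `I × J` and
`u_t = H̃[ζ]` holds on the line `x = x₀`, then `u_t = H̃[ζ]` holds on all of `I × J`
and `u` solves the evolution equation there. -/
theorem invariant_surface_propagation
    (r : ℕ) (hr : 1 ≤ r) (H : ℝ → ℝ → (Fin (r + 1) → ℝ) → ℝ)
    (hH : ContDiff ℝ (⊤ : ℕ∞) fun q : ℝ × ℝ × (Fin (r + 1) → ℝ) => H q.1 q.2.1 q.2.2)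
    (Ω : Set (ℝ × ℝ × ℝ)) (hΩ : IsOpen Ω)
    (ζ : ℝ × ℝ × ℝ → ℝ) (hζ : ContDiffOn ℝ (⊤ : ℕ∞) ζ Ω)
    (hDE : ∀ p ∈ Ω,
      pdt ζ p + pdu ζ p * Htil r H ζ p
        = pdx (Htil r H ζ) p + ζ p * pdu (Htil r H ζ) p)
    (I J : Set ℝ) (hI : IsOpen I) (hI' : IsPreconnected I)
    (hJ : IsOpen J) (hJ' : IsPreconnected J) (x₀ : ℝ) (hx₀ : x₀ ∈ J)
    (u : ℝ × ℝ → ℝ) (hu : ContDiffOn ℝ (⊤ : ℕ∞) u (I ×ˢ J))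
    (hmem : ∀ t ∈ I, ∀ x ∈ J, (t, x, u (t, x)) ∈ Ω)
    (hisc : ∀ t ∈ I, ∀ x ∈ J, deriv (fun s => u (t, s)) x = ζ (t, x, u (t, x)))
    (hline : ∀ t ∈ I, deriv (fun s => u (s, x₀)) t = Htil r H ζ (t, x₀, u (t, x₀))) :
    (∀ t ∈ I, ∀ x ∈ J, deriv (fun s => u (s, x)) t = Htil r H ζ (t, x, u (t, x))) ∧
    (∀ t ∈ I, ∀ x ∈ J, deriv (fun s => u (s, x)) t
        = H t x (fun i => iteratedDeriv i.val (fun s => u (t, s)) x)) := by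
  set S : Set (ℝ × ℝ) := I ×ˢ J with hSdef
  have hS : IsOpen S := hI.prod hJ
  set Ut : ℝ × ℝ → ℝ := fun q => fderiv ℝ u q ((1:ℝ),(0:ℝ)) with hUt
  set Ux : ℝ × ℝ → ℝ := fun q => fderiv ℝ u q ((0:ℝ),(1:ℝ)) with hUx
  have hqS : ∀ {t x : ℝ}, t ∈ I → x ∈ J → ((t,x) : ℝ×ℝ) ∈ S := fun ht hx => ⟨ht, hx⟩
  have hdt : ∀ {t x : ℝ}, t ∈ I → x ∈ J →
      HasDerivAt (fun s => u (s, x)) (Ut (t,x)) t := by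
    intro t x ht hx; exact hasDerivAt2_t hu hS (hqS ht hx)
  have hdx : ∀ {t x : ℝ}, t ∈ I → x ∈ J →
      HasDerivAt (fun s => u (t, s)) (Ux (t,x)) x := by
    intro t x ht hx; exact hasDerivAt2_x hu hS (hqS ht hx)
  have hUxζ : ∀ {t x : ℝ}, t ∈ I → x ∈ J → Ux (t,x) = ζ (t, x, u (t,x)) := by
    intro t x ht hx
    rw [← (hdx ht hx).deriv]
    exact hisc t ht x hx
  have hHt : ContDiffOn ℝ (⊤ : ℕ∞) (Htil r H ζ) Ω := Htil_smooth hH hζ hΩ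
  have key : ∀ t ∈ I, ∀ x ∈ J, Ut (t,x) = Htil r H ζ (t, x, u (t,x)) := by
    intro t ht
    set φ : ℝ → ℝ := fun x => Ut (t,x) - Htil r H ζ (t, x, u (t,x)) with hφdef
    set c : ℝ → ℝ := fun x => pdu ζ (t, x, u (t,x)) with hcdef
    have hcu : ContinuousOn (fun x => u (t,x)) J := by
      refine (hu.continuousOn.comp ?_ ?_)
      · exact (continuous_const.prodMk continuous_id).continuousOn
      · intro x hx; exact hqS ht hx
    have hmapΩ : ∀ x ∈ J, (t, x, u (t,x)) ∈ Ω := fun x hx => hmem t ht x hx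
    have hinnc : ContinuousOn (fun x => ((t, x, u (t,x)) : ℝ×ℝ×ℝ)) J :=
      continuous_const.continuousOn.prodMk
        (continuous_id.continuousOn.prodMk hcu)
    have hcc : ContinuousOn c J := by
      refine ((pdu_smooth hζ hΩ).continuousOn.comp hinnc ?_)
      intro x hx; exact hmapΩ x hx
    have hφd : ∀ x ∈ J, HasDerivAt φ (c x * φ x) x := by
      intro x hx
      have hp : (t, x, u (t,x)) ∈ Ω := hmapΩ x hx
      set p : ℝ × ℝ × ℝ := (t, x, u (t,x)) with hpdef
      have hA : HasDerivAt (fun x' => Ut (t,x'))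
          (fderiv ℝ (fderiv ℝ u) (t,x) ((0:ℝ),(1:ℝ)) ((1:ℝ),(0:ℝ))) x :=
        hasDerivAt_W_x hu hS ((1:ℝ),(0:ℝ)) (hqS ht hx)
      have hB : fderiv ℝ (fderiv ℝ u) (t,x) ((0:ℝ),(1:ℝ)) ((1:ℝ),(0:ℝ))
          = pdt ζ p + Ut (t,x) * pdu ζ p := by
        rw [snd_deriv_symm hu hS (hqS ht hx)]
        have hC : HasDerivAt (fun s => Ux (s, x))
            (fderiv ℝ (fderiv ℝ u) (t,x) ((1:ℝ),(0:ℝ)) ((0:ℝ),(1:ℝ))) t :=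
          hasDerivAt_W_t hu hS ((0:ℝ),(1:ℝ)) (hqS ht hx)
        have hev : (fun s => Ux (s, x)) =ᶠ[nhds t] fun s => ζ (s, x, u (s, x)) := by
          filter_upwards [hI.mem_nhds ht] with s hs
          exact hUxζ hs hx
        have hD : HasDerivAt (fun s => ζ (s, x, u (s, x)))
            (pdt ζ p + Ut (t,x) * pdu ζ p) t :=
          chain_t (diffAt_of_contDiffOn hζ hΩ hp) (hdt ht hx) rfl
        rw [← hC.deriv, hev.deriv_eq, hD.deriv]
      have hE : HasDerivAt (fun x' => Htil r H ζ (t, x', u (t,x')))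
          (pdx (Htil r H ζ) p + ζ p * pdu (Htil r H ζ) p) x := by
        refine chain_x (diffAt_of_contDiffOn hHt hΩ hp) ?_ rfl
        have h5 := hdx ht hx
        rwa [hUxζ ht hx] at h5
      have hF : HasDerivAt φ
          ((pdt ζ p + Ut (t,x) * pdu ζ p)
            - (pdx (Htil r H ζ) p + ζ p * pdu (Htil r H ζ) p)) x :=
        (hB ▸ hA).sub hE
      have hG := hDE p hp
      convert hF using 1
      rw [← hG]
      have hφx : φ x = Ut (t,x) - Htil r H ζ p := rfl
      have hcx : c x = pdu ζ p := rfl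
      rw [hφx, hcx]
      ring
    have hφ0 : φ x₀ = 0 := by
      have h1 := hline t ht
      have h2 := (hdt ht hx₀).deriv
      simp only [hφdef]
      rw [← h2, h1]
      ring
    intro x hx
    have h3 : φ x = 0 := ode_zero hJ hJ' hcc hφd hx₀ hφ0 x hx
    have h4 : Ut (t,x) - Htil r H ζ (t, x, u (t,x)) = 0 := h3
    linarith
  constructor
  · intro t ht x hx
    rw [(hdt ht hx).deriv]
    exact key t ht x hx
  · intro t ht x hx
    have hiter : ∀ j, ∀ y ∈ J,
        iteratedDeriv (j+1) (fun s => u (t, s)) y = Dit ζ j (t, y, u (t,y)) := by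
      intro j
      induction j with
      | zero =>
        intro y hy
        rw [iteratedDeriv_one]
        exact hisc t ht y hy
      | succ j ih =>
        intro y hy
        rw [iteratedDeriv_succ]
        have hev : iteratedDeriv (j+1) (fun s => u (t, s))
            =ᶠ[nhds y] fun y' => Dit ζ j (t, y', u (t,y')) := by
          filter_upwards [hJ.mem_nhds hy] with y' hy'
          exact ih y' hy'
        have hp : (t, y, u (t,y)) ∈ Ω := hmem t ht y hy
        have hcurve : HasDerivAt (fun s => u (t, s)) (ζ (t, y, u (t,y))) y := by
          have h5 := hdx ht hy
          rwa [hUxζ ht hy] at h5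
        have hD : HasDerivAt (fun y' => Dit ζ j (t, y', u (t,y')))
            (pdx (Dit ζ j) (t, y, u (t,y))
              + ζ (t, y, u (t,y)) * pdu (Dit ζ j) (t, y, u (t,y))) y :=
          chain_x (diffAt_of_contDiffOn (Dit_smooth hζ hΩ j) hΩ hp) hcurve rfl
        rw [hev.deriv_eq, hD.deriv]
        rfl
    have hvec : (fun i : Fin (r+1) => iteratedDeriv i.val (fun s => u (t, s)) x)
        = fun i : Fin (r+1) => if i.val = 0 then u (t,x)
            else Dit ζ (i.val - 1) (t, x, u (t,x)) := by
      funext i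
      rcases Nat.eq_zero_or_pos i.val with h | h
      · simp [h]
      · obtain ⟨j, hj⟩ := Nat.exists_eq_add_of_le h
        have hij : i.val = j + 1 := by omega
        rw [hij]
        simp only [Nat.add_sub_cancel, if_neg (Nat.succ_ne_zero j)]
        exact hiter j x hx
    rw [(hdt ht hx).deriv, key t ht x hx, Htil, hvec]
end

section
/- (i) If u : W → ℝ (W ⊆ ℝ² open) is smooth and solves ∂₁∂₂u = F(u), then ζ := ∂₂u satisfies ∂₁ζ(x) ∈ J for all x ∈ W, u = F̃(∂₁ζ), and ∂₁∂₂ζ = ζ · F′(F̃(∂₁ζ)) on W. (ii) Conversely, if ζ : W → ℝ is smooth with ∂₁ζ valued in J and ∂₁∂₂ζ = ζ · F′(F̃(∂₁ζ)) on W, then u := F̃ ∘ ∂₁ζ solves ∂₁∂₂u = F(u) on W and ∂₂u = ζ. These assignments are mutually inverse, so there is a one-to-one correspondence between solutions of the wave equation and smooth functions ζ of (x₁,x₂) satisfying ∂₁∂₂ζ = ζ·F′(F̃(∂₁ζ)). -/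
open Filter Topology

/-- Partial derivative in `x₁` of a function of two real variables. -/
noncomputable def d1 (f : ℝ × ℝ → ℝ) (q : ℝ × ℝ) : ℝ := deriv (fun s => f (s, q.2)) q.1

/-- Partial derivative in `x₂` of a function of two real variables. -/
noncomputable def d2 (f : ℝ × ℝ → ℝ) (q : ℝ × ℝ) : ℝ := deriv (fun s => f (q.1, s)) q.2

/-- Derivative of the first slice of a function with a total derivative. -/
lemma wave_slice1_hasDerivAt {f : ℝ × ℝ → ℝ} {f' : ℝ × ℝ →L[ℝ] ℝ} {q : ℝ × ℝ}
    (h : HasFDerivAt f f' q) :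
    HasDerivAt (fun s => f (s, q.2)) (f' (1, 0)) q.1 := by
  have hL : HasDerivAt (fun s : ℝ => (s, q.2)) ((1 : ℝ), (0 : ℝ)) q.1 :=
    HasDerivAt.prodMk (hasDerivAt_id q.1) (hasDerivAt_const q.1 q.2)
  have h' : HasFDerivAt f f' ((q.1, q.2)) := by simpa using h
  exact h'.comp_hasDerivAt q.1 hL

/-- Derivative of the second slice of a function with a total derivative. -/
lemma wave_slice2_hasDerivAt {f : ℝ × ℝ → ℝ} {f' : ℝ × ℝ →L[ℝ] ℝ} {q : ℝ × ℝ}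
    (h : HasFDerivAt f f' q) :
    HasDerivAt (fun s => f (q.1, s)) (f' (0, 1)) q.2 := by
  have hL : HasDerivAt (fun s : ℝ => (q.1, s)) ((0 : ℝ), (1 : ℝ)) q.2 :=
    HasDerivAt.prodMk (hasDerivAt_const q.2 q.1) (hasDerivAt_id q.2)
  have h' : HasFDerivAt f f' ((q.1, q.2)) := by simpa using h
  exact h'.comp_hasDerivAt q.2 hL

lemma wave_d1_eq {f : ℝ × ℝ → ℝ} {q : ℝ × ℝ} (h : DifferentiableAt ℝ f q) :
    d1 f q = fderiv ℝ f q (1, 0) := (wave_slice1_hasDerivAt h.hasFDerivAt).deriv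

lemma wave_d2_eq {f : ℝ × ℝ → ℝ} {q : ℝ × ℝ} (h : DifferentiableAt ℝ f q) :
    d2 f q = fderiv ℝ f q (0, 1) := (wave_slice2_hasDerivAt h.hasFDerivAt).deriv

lemma wave_diffAt {f : ℝ × ℝ → ℝ} {W : Set (ℝ × ℝ)} (hf : ContDiffOn ℝ (⊤ : ℕ∞) f W)
    (hW : IsOpen W) {q : ℝ × ℝ} (hq : q ∈ W) : DifferentiableAt ℝ f q :=
  ((hf.differentiableOn (by simp)) q hq).differentiableAt (hW.mem_nhds hq)

lemma wave_d1_contDiffOn {f : ℝ × ℝ → ℝ} {W : Set (ℝ × ℝ)} (hf : ContDiffOn ℝ (⊤ : ℕ∞) f W)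
    (hW : IsOpen W) : ContDiffOn ℝ (⊤ : ℕ∞) (d1 f) W := by
  have h1 : ContDiffOn ℝ (⊤ : ℕ∞) (fderiv ℝ f) W := hf.fderiv_of_isOpen hW (by simp)
  have h2 : ContDiffOn ℝ (⊤ : ℕ∞) (fun q => fderiv ℝ f q (1, 0)) W :=
    h1.clm_apply contDiffOn_const
  exact h2.congr fun q hq => wave_d1_eq (wave_diffAt hf hW hq)

lemma wave_d2_contDiffOn {f : ℝ × ℝ → ℝ} {W : Set (ℝ × ℝ)} (hf : ContDiffOn ℝ (⊤ : ℕ∞) f W)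
    (hW : IsOpen W) : ContDiffOn ℝ (⊤ : ℕ∞) (d2 f) W := by
  have h1 : ContDiffOn ℝ (⊤ : ℕ∞) (fderiv ℝ f) W := hf.fderiv_of_isOpen hW (by simp)
  have h2 : ContDiffOn ℝ (⊤ : ℕ∞) (fun q => fderiv ℝ f q (0, 1)) W :=
    h1.clm_apply contDiffOn_const
  exact h2.congr fun q hq => wave_d2_eq (wave_diffAt hf hW hq)

lemma wave_ev_mem1 {W : Set (ℝ × ℝ)} (hW : IsOpen W) {q : ℝ × ℝ} (hq : q ∈ W) :
    ∀ᶠ s in 𝓝 q.1, (s, q.2) ∈ W := by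
  have : ContinuousAt (fun s : ℝ => (s, q.2)) q.1 := by fun_prop
  exact this (hW.mem_nhds (by simpa using hq))

lemma wave_ev_mem2 {W : Set (ℝ × ℝ)} (hW : IsOpen W) {q : ℝ × ℝ} (hq : q ∈ W) :
    ∀ᶠ s in 𝓝 q.2, (q.1, s) ∈ W := by
  have : ContinuousAt (fun s : ℝ => (q.1, s)) q.2 := by fun_prop
  exact this (hW.mem_nhds (by simpa using hq))

/-- Symmetry of mixed partial derivatives for a smooth function on an open set. -/
lemma wave_mixed_symm {f : ℝ × ℝ → ℝ} {W : Set (ℝ × ℝ)} (hf : ContDiffOn ℝ (⊤ : ℕ∞) f W)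
    (hW : IsOpen W) {q : ℝ × ℝ} (hq : q ∈ W) :
    d1 (d2 f) q = d2 (d1 f) q := by
  set g := fun p => fderiv ℝ f p with hg
  have hg' : ContDiffOn ℝ (⊤ : ℕ∞) g W := hf.fderiv_of_isOpen hW (by simp)
  have hgd : DifferentiableAt ℝ g q :=
    ((hg'.differentiableOn (by simp)) q hq).differentiableAt (hW.mem_nhds hq)
  set f'' := fderiv ℝ g q with hf''
  have hev : ∀ᶠ y in 𝓝 q, HasFDerivAt f (g y) y := by
    filter_upwards [hW.mem_nhds hq] with y hy using (wave_diffAt hf hW hy).hasFDerivAt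
  have hsymm : f'' (1, 0) (0, 1) = f'' (0, 1) (1, 0) :=
    second_derivative_symmetric_of_eventually hev hgd.hasFDerivAt _ _
  have e2 : HasFDerivAt (fun p => g p ((0:ℝ), (1:ℝ)))
      ((ContinuousLinearMap.apply ℝ ℝ ((0:ℝ),(1:ℝ))).comp f'') q :=
    (ContinuousLinearMap.apply ℝ ℝ ((0:ℝ),(1:ℝ))).hasFDerivAt.comp q hgd.hasFDerivAt
  have e1 : HasFDerivAt (fun p => g p ((1:ℝ), (0:ℝ)))
      ((ContinuousLinearMap.apply ℝ ℝ ((1:ℝ),(0:ℝ))).comp f'') q :=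
    (ContinuousLinearMap.apply ℝ ℝ ((1:ℝ),(0:ℝ))).hasFDerivAt.comp q hgd.hasFDerivAt
  have key1 : d1 (d2 f) q = f'' (1, 0) (0, 1) := by
    have heq : (fun s => d2 f (s, q.2)) =ᶠ[𝓝 q.1] (fun s => g (s, q.2) ((0:ℝ),(1:ℝ))) := by
      filter_upwards [wave_ev_mem1 hW hq] with s hs using wave_d2_eq (wave_diffAt hf hW hs)
    have h := (wave_slice1_hasDerivAt e2).deriv
    calc d1 (d2 f) q = deriv (fun s => g (s, q.2) ((0:ℝ),(1:ℝ))) q.1 := heq.deriv_eq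
      _ = f'' (1, 0) (0, 1) := h
  have key2 : d2 (d1 f) q = f'' (0, 1) (1, 0) := by
    have heq : (fun s => d1 f (q.1, s)) =ᶠ[𝓝 q.2] (fun s => g (q.1, s) ((1:ℝ),(0:ℝ))) := by
      filter_upwards [wave_ev_mem2 hW hq] with s hs using wave_d1_eq (wave_diffAt hf hW hs)
    have h := (wave_slice2_hasDerivAt e1).deriv
    calc d2 (d1 f) q = deriv (fun s => g (q.1, s) ((1:ℝ),(0:ℝ))) q.2 := heq.deriv_eq
      _ = f'' (0, 1) (1, 0) := h
  rw [key1, key2, hsymm]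

/-- Theorem 4: for the wave equation `∂₁∂₂u = F(u)` with `F′` nowhere zero (so that `F`
is a diffeomorphism onto the open interval `J = F(ℝ)` with inverse `F̃`), there is a
one-to-one correspondence between solutions `u` of the wave equation and smooth
functions `ζ = ζ(x₁,x₂)` satisfying `∂₁∂₂ζ = ζ·F′(F̃(∂₁ζ))`; the mutually inverse
assignments are `ζ = ∂₂u` and `u = F̃(∂₁ζ)`. -/
theorem wave_solutions_correspond_to_coorder_zero_operators
    (F : ℝ → ℝ) (hF : ContDiff ℝ (⊤ : ℕ∞) F) (hF' : ∀ v, deriv F v ≠ 0)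
    (Ft : ℝ → ℝ)  -- the inverse `F̃` of `F` on `J = F(ℝ) = Set.range F`
    (hJ : IsOpen (Set.range F)) (hFt : ContDiffOn ℝ (⊤ : ℕ∞) Ft (Set.range F))
    (hFt1 : ∀ v, Ft (F v) = v) (hFt2 : ∀ y ∈ Set.range F, F (Ft y) = y)
    (W : Set (ℝ × ℝ)) (hW : IsOpen W) :
    -- (i) every solution `u` of the wave equation gives `ζ := ∂₂u` solving the ζ-equation,
    --     with `u` recovered as `u = F̃(∂₁ζ)`
    (∀ u : ℝ × ℝ → ℝ, ContDiffOn ℝ (⊤ : ℕ∞) u W →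
      (∀ q ∈ W, d1 (d2 u) q = F (u q)) →
      (∀ q ∈ W,
        d1 (d2 u) q ∈ Set.range F ∧
        u q = Ft (d1 (d2 u) q) ∧
        d1 (d2 (d2 u)) q = d2 u q * deriv F (Ft (d1 (d2 u) q)))) ∧
    -- (ii) conversely, every solution `ζ` of the ζ-equation gives the solution
    --      `u := F̃(∂₁ζ)` of the wave equation, with `ζ` recovered as `ζ = ∂₂u`
    (∀ ζ : ℝ × ℝ → ℝ, ContDiffOn ℝ (⊤ : ℕ∞) ζ W →
      (∀ q ∈ W, d1 ζ q ∈ Set.range F) →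
      (∀ q ∈ W, d1 (d2 ζ) q = ζ q * deriv F (Ft (d1 ζ q))) →
      (∀ q ∈ W,
        d1 (d2 fun q' => Ft (d1 ζ q')) q = F (Ft (d1 ζ q)) ∧
        d2 (fun q' => Ft (d1 ζ q')) q = ζ q)) := by
  constructor
  · -- part (i)
    intro u hu heq q hq
    have h1 : d1 (d2 u) q = F (u q) := heq q hq
    refine ⟨by rw [h1]; exact ⟨u q, rfl⟩, by rw [h1, hFt1], ?_⟩
    rw [h1, hFt1]
    -- goal: d1 (d2 (d2 u)) q = d2 u q * deriv F (u q)
    have hd2u : ContDiffOn ℝ (⊤ : ℕ∞) (d2 u) W := wave_d2_contDiffOn hu hW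
    rw [wave_mixed_symm hd2u hW hq]
    -- d2 (d1 (d2 u)) q
    have hslice : HasDerivAt (fun s => u (q.1, s)) (d2 u q) q.2 := by
      have h := wave_slice2_hasDerivAt (wave_diffAt hu hW hq).hasFDerivAt
      rwa [← wave_d2_eq (wave_diffAt hu hW hq)] at h
    have hFd : HasDerivAt F (deriv F (u q)) (u q) :=
      ((hF.differentiable (by simp)) (u q)).hasDerivAt
    have hcomp : HasDerivAt (fun s => F (u (q.1, s))) (deriv F (u q) * d2 u q) q.2 :=
      hFd.comp q.2 hslice
    have heq' : (fun s => d1 (d2 u) (q.1, s)) =ᶠ[𝓝 q.2] (fun s => F (u (q.1, s))) := by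
      filter_upwards [wave_ev_mem2 hW hq] with s hs using heq (q.1, s) hs
    calc d2 (d1 (d2 u)) q = deriv (fun s => F (u (q.1, s))) q.2 := heq'.deriv_eq
      _ = deriv F (u q) * d2 u q := hcomp.deriv
      _ = d2 u q * deriv F (u q) := mul_comm _ _
  · -- part (ii)
    intro ζ hζ hmem hζeq
    set g := d1 ζ with hgdef
    have hg : ContDiffOn ℝ (⊤ : ℕ∞) g W := wave_d1_contDiffOn hζ hW
    have hFtderiv : ∀ y ∈ Set.range F, deriv F (Ft y) * deriv Ft y = 1 := by
      intro y hy
      have hFtd : DifferentiableAt ℝ Ft y :=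
        ((hFt.differentiableOn (by simp)) y hy).differentiableAt (hJ.mem_nhds hy)
      have hcomp : HasDerivAt (fun z => F (Ft z)) (deriv F (Ft y) * deriv Ft y) y :=
        (((hF.differentiable (by simp)) (Ft y)).hasDerivAt).comp y hFtd.hasDerivAt
      have hid : (fun z => F (Ft z)) =ᶠ[𝓝 y] id := by
        filter_upwards [hJ.mem_nhds hy] with z hz using hFt2 z hz
      have h1 : HasDerivAt (fun z => F (Ft z)) 1 y :=
        (hasDerivAt_id y).congr_of_eventuallyEq hid
      exact hcomp.unique h1
    have key : ∀ q ∈ W, d2 (fun q' => Ft (d1 ζ q')) q = ζ q := by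
      intro q hq
      have hgd : DifferentiableAt ℝ g q := wave_diffAt hg hW hq
      have hs : HasDerivAt (fun s => g (q.1, s)) (d2 g q) q.2 := by
        have h := wave_slice2_hasDerivAt hgd.hasFDerivAt
        rwa [← wave_d2_eq hgd] at h
      have hFtd : HasDerivAt Ft (deriv Ft (g q)) (g q) :=
        (((hFt.differentiableOn (by simp)) _ (hmem q hq)).differentiableAt
          (hJ.mem_nhds (hmem q hq))).hasDerivAt
      have hcomp : HasDerivAt (fun s => Ft (g (q.1, s))) (deriv Ft (g q) * d2 g q) q.2 :=
        hFtd.comp q.2 hs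
      have hval : d2 (fun q' => Ft (d1 ζ q')) q = deriv Ft (g q) * d2 g q := hcomp.deriv
      rw [hval]
      have hsym : d2 g q = ζ q * deriv F (Ft (g q)) :=
        (wave_mixed_symm hζ hW hq).symm.trans (hζeq q hq)
      rw [hsym]
      calc deriv Ft (g q) * (ζ q * deriv F (Ft (g q)))
          = ζ q * (deriv F (Ft (g q)) * deriv Ft (g q)) := by ring
        _ = ζ q := by rw [hFtderiv _ (hmem q hq), mul_one]
    intro q hq
    refine ⟨?_, key q hq⟩
    have heq' : (fun s => d2 (fun q' => Ft (d1 ζ q')) (s, q.2)) =ᶠ[𝓝 q.1]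
        (fun s => ζ (s, q.2)) := by
      filter_upwards [wave_ev_mem1 hW hq] with s hs using key (s, q.2) hs
    calc d1 (d2 fun q' => Ft (d1 ζ q')) q = deriv (fun s => ζ (s, q.2)) q.1 := heq'.deriv_eq
      _ = d1 ζ q := rfl
      _ = F (Ft (d1 ζ q)) := (hFt2 _ (hmem q hq)).symm
end

section
/- Let u : W → ℝ (W ⊆ ℝ² open) be a smooth solution of ∂₁∂₂u = F(u), and set ζ := ∂₂u and ζ* := ∂₁u. Then ζ and ζ* are related by the formulas ζ* = ∂₁∂₁ζ / F′(F̃(∂₁ζ)) and ζ = ∂₂∂₂ζ* / F′(F̃(∂₂ζ*)) on W, where ∂₁ζ and ∂₂ζ* take values in J. -/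
open Filter

private lemma slice1 {E : Type*} [NormedAddCommGroup E] [NormedSpace ℝ E]
    {f : ℝ × ℝ → E} {q : ℝ × ℝ} (hf : DifferentiableAt ℝ f q) :
    HasDerivAt (fun s => f (s, q.2)) (fderiv ℝ f q (1, 0)) q.1 := by
  have h2 : HasDerivAt (fun s : ℝ => (s, q.2)) ((1 : ℝ), (0 : ℝ)) q.1 :=
    (hasDerivAt_id q.1).prodMk (hasDerivAt_const q.1 q.2)
  have := hf.hasFDerivAt.comp_hasDerivAt q.1 h2
  simpa [Function.comp_def] using this

private lemma slice2 {E : Type*} [NormedAddCommGroup E] [NormedSpace ℝ E]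
    {f : ℝ × ℝ → E} {q : ℝ × ℝ} (hf : DifferentiableAt ℝ f q) :
    HasDerivAt (fun s => f (q.1, s)) (fderiv ℝ f q (0, 1)) q.2 := by
  have h2 : HasDerivAt (fun s : ℝ => (q.1, s)) ((0 : ℝ), (1 : ℝ)) q.2 :=
    (hasDerivAt_const q.2 q.1).prodMk (hasDerivAt_id q.2)
  have := hf.hasFDerivAt.comp_hasDerivAt q.2 h2
  simpa [Function.comp_def] using this
/-- Corollary 7: for a solution `u` of the wave equation `∂₁∂₂u = F(u)` (with `F` a
diffeomorphism onto `J = F(ℝ)` with inverse `F̃`), the adjoint coefficients `ζ = ∂₂u`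
and `ζ* = ∂₁u` satisfy `ζ* = ∂₁∂₁ζ / F′(F̃(∂₁ζ))` and `ζ = ∂₂∂₂ζ* / F′(F̃(∂₂ζ*))`,
where `∂₁ζ` and `∂₂ζ*` take values in `J`. -/
theorem adjoint_coorder_zero_operators
    (F : ℝ → ℝ) (hF : ContDiff ℝ (⊤ : ℕ∞) F) (hF' : ∀ v, deriv F v ≠ 0)
    (Ft : ℝ → ℝ)  -- the inverse `F̃` of `F` on `J = F(ℝ) = Set.range F`
    (hJ : IsOpen (Set.range F)) (hFt : ContDiffOn ℝ (⊤ : ℕ∞) Ft (Set.range F))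
    (hFt1 : ∀ v, Ft (F v) = v) (hFt2 : ∀ y ∈ Set.range F, F (Ft y) = y)
    (W : Set (ℝ × ℝ)) (hW : IsOpen W)
    (u : ℝ × ℝ → ℝ) (hu : ContDiffOn ℝ (⊤ : ℕ∞) u W)
    (hsol : ∀ q ∈ W, d1 (d2 u) q = F (u q)) :
    ∀ q ∈ W,
      d1 (d2 u) q ∈ Set.range F ∧
      d2 (d1 u) q ∈ Set.range F ∧
      d1 u q = d1 (d1 (d2 u)) q / deriv F (Ft (d1 (d2 u) q)) ∧
      d2 u q = d2 (d2 (d1 u)) q / deriv F (Ft (d2 (d1 u) q)) := by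
  have hUat : ∀ x ∈ W, ContDiffAt ℝ (⊤ : ℕ∞) u x := fun x hx => hu.contDiffAt (hW.mem_nhds hx)
  have hdiff : ∀ x ∈ W, DifferentiableAt ℝ u x := fun x hx =>
    (hUat x hx).differentiableAt (by simp)
  have hd1 : ∀ x ∈ W, d1 u x = fderiv ℝ u x (1, 0) := fun x hx =>
    (slice1 (hdiff x hx)).deriv
  have hd2 : ∀ x ∈ W, d2 u x = fderiv ℝ u x (0, 1) := fun x hx =>
    (slice2 (hdiff x hx)).deriv
  have hG : ∀ x ∈ W, DifferentiableAt ℝ (fderiv ℝ u) x := fun x hx =>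
    ((hUat x hx).fderiv_right (m := 1) ((WithTop.coe_le_coe.mpr le_top))).differentiableAt one_ne_zero
  -- mixed partials via fderiv of fderiv
  have hmix1 : ∀ x ∈ W, d1 (d2 u) x = fderiv ℝ (fderiv ℝ u) x (1, 0) (0, 1) := by
    intro x hx
    have hnb : ∀ᶠ s in nhds x.1, (s, x.2) ∈ W :=
      ((Continuous.prodMk_left x.2).continuousAt).preimage_mem_nhds (hW.mem_nhds hx)
    have hEq : (fun s => d2 u (s, x.2)) =ᶠ[nhds x.1]
        (fun s => fderiv ℝ u (s, x.2) (0, 1)) := by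
      filter_upwards [hnb] with s hs using hd2 _ hs
    have h1 : HasDerivAt (fun s => fderiv ℝ u (s, x.2)) (fderiv ℝ (fderiv ℝ u) x (1, 0)) x.1 :=
      slice1 (hG x hx)
    have h2 : HasDerivAt (fun s => fderiv ℝ u (s, x.2) (0, 1))
        (fderiv ℝ (fderiv ℝ u) x (1, 0) (0, 1)) x.1 := by
      simpa using h1.clm_apply (hasDerivAt_const x.1 ((0 : ℝ), (1 : ℝ)))
    calc d1 (d2 u) x = deriv (fun s => fderiv ℝ u (s, x.2) (0, 1)) x.1 := hEq.deriv_eq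
      _ = _ := h2.deriv
  have hmix2 : ∀ x ∈ W, d2 (d1 u) x = fderiv ℝ (fderiv ℝ u) x (0, 1) (1, 0) := by
    intro x hx
    have hnb : ∀ᶠ s in nhds x.2, (x.1, s) ∈ W :=
      ((Continuous.prodMk_right x.1).continuousAt).preimage_mem_nhds (hW.mem_nhds hx)
    have hEq : (fun s => d1 u (x.1, s)) =ᶠ[nhds x.2]
        (fun s => fderiv ℝ u (x.1, s) (1, 0)) := by
      filter_upwards [hnb] with s hs using hd1 _ hs
    have h1 : HasDerivAt (fun s => fderiv ℝ u (x.1, s)) (fderiv ℝ (fderiv ℝ u) x (0, 1)) x.2 :=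
      slice2 (hG x hx)
    have h2 : HasDerivAt (fun s => fderiv ℝ u (x.1, s) (1, 0))
        (fderiv ℝ (fderiv ℝ u) x (0, 1) (1, 0)) x.2 := by
      simpa using h1.clm_apply (hasDerivAt_const x.2 ((1 : ℝ), (0 : ℝ)))
    calc d2 (d1 u) x = deriv (fun s => fderiv ℝ u (x.1, s) (1, 0)) x.2 := hEq.deriv_eq
      _ = _ := h2.deriv
  have hswap : ∀ x ∈ W, d2 (d1 u) x = F (u x) := by
    intro x hx
    have hsymm := (hUat x hx).isSymmSndFDerivAt (by rw [minSmoothness_of_isRCLikeNormedField]; exact WithTop.coe_le_coe.mpr le_top)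
    rw [hmix2 x hx, hsymm, ← hmix1 x hx, hsol x hx]
  intro q hq
  refine ⟨⟨u q, (hsol q hq).symm⟩, ⟨u q, (hswap q hq).symm⟩, ?_, ?_⟩
  · -- d1 u q = d1 (d1 (d2 u)) q / F'(Ft (d1 (d2 u) q))
    have hnb : ∀ᶠ s in nhds q.1, (s, q.2) ∈ W :=
      ((Continuous.prodMk_left q.2).continuousAt).preimage_mem_nhds (hW.mem_nhds hq)
    have hEq : (fun s => d1 (d2 u) (s, q.2)) =ᶠ[nhds q.1] (fun s => F (u (s, q.2))) := by
      filter_upwards [hnb] with s hs using hsol _ hs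
    have hFq : HasDerivAt F (deriv F (u q)) (u q) :=
      ((hF.differentiable (by simp)) (u q)).hasDerivAt.congr_deriv rfl
    have hus : HasDerivAt (fun s => u (s, q.2)) (d1 u q) q.1 := by
      rw [hd1 q hq]; exact slice1 (hdiff q hq)
    have hcomp : HasDerivAt (fun s => F (u (s, q.2))) (deriv F (u q) * d1 u q) q.1 :=
      hFq.comp q.1 hus
    have key : d1 (d1 (d2 u)) q = deriv F (u q) * d1 u q := by
      calc d1 (d1 (d2 u)) q = deriv (fun s => F (u (s, q.2))) q.1 := hEq.deriv_eq
        _ = _ := hcomp.deriv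
    rw [hsol q hq, hFt1, key, mul_div_cancel_left₀ _ (hF' (u q))]
  · have hnb : ∀ᶠ s in nhds q.2, (q.1, s) ∈ W :=
      ((Continuous.prodMk_right q.1).continuousAt).preimage_mem_nhds (hW.mem_nhds hq)
    have hEq : (fun s => d2 (d1 u) (q.1, s)) =ᶠ[nhds q.2] (fun s => F (u (q.1, s))) := by
      filter_upwards [hnb] with s hs using hswap _ hs
    have hFq : HasDerivAt F (deriv F (u q)) (u q) :=
      ((hF.differentiable (by simp)) (u q)).hasDerivAt.congr_deriv rfl
    have hus : HasDerivAt (fun s => u (q.1, s)) (d2 u q) q.2 := by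
      rw [hd2 q hq]; exact slice2 (hdiff q hq)
    have hcomp : HasDerivAt (fun s => F (u (q.1, s))) (deriv F (u q) * d2 u q) q.2 :=
      hFq.comp q.2 hus
    have key : d2 (d2 (d1 u)) q = deriv F (u q) * d2 u q := by
      calc d2 (d2 (d1 u)) q = deriv (fun s => F (u (q.1, s))) q.2 := hEq.deriv_eq
        _ = _ := hcomp.deriv
    rw [hswap q hq, hFt1, key, mul_div_cancel_left₀ _ (hF' (u q))]
end

section
/- Let F : ℝ → ℝ be smooth, let ζ : Ω → ℝ be smooth on an open Ω ⊆ ℝ³ with ζᵤ nowhere zero, set ζ* := (F(u) − ζ₁)/ζᵤ, and let Φ : Ω → ℝ be smooth with Φ₂ + ζΦᵤ = 0, Φ₁ + ζ*Φᵤ = 0 and Φᵤ nowhere zero on Ω. Suppose ũ = ũ(x,κ) is smooth with (x,ũ(x,κ)) ∈ Ω and Φ(x,ũ(x,κ)) = κ for all (x,κ) in its domain. Then ∂₁ũ = ζ*(x,ũ), ∂₂ũ = ζ(x,ũ), ∂_κũ = 1/Φᵤ(x,ũ) ≠ 0, and for each fixed κ the function x ↦ ũ(x,κ) solves ∂₁∂₂u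 = F(u). -/
/-- Partial derivative in `x₁` of a function of `(x₁,x₂,u)`. -/
noncomputable def pd1 (f : ℝ × ℝ × ℝ → ℝ) (p : ℝ × ℝ × ℝ) : ℝ :=
  deriv (fun s => f (s, p.2.1, p.2.2)) p.1

/-- Partial derivative in `x₂` of a function of `(x₁,x₂,u)`. -/
noncomputable def pd2 (f : ℝ × ℝ × ℝ → ℝ) (p : ℝ × ℝ × ℝ) : ℝ :=
  deriv (fun s => f (p.1, s, p.2.2)) p.2.1

lemma pd1_eq_fderiv {g : ℝ × ℝ × ℝ → ℝ} {a b c : ℝ}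
    (hg : DifferentiableAt ℝ g (a, b, c)) :
    pd1 g (a, b, c) = fderiv ℝ g (a, b, c) (1, 0, 0) := by
  have hl : HasDerivAt (fun s : ℝ => (s, b, c)) ((1:ℝ), (0:ℝ), (0:ℝ)) a :=
    (hasDerivAt_id a).prodMk ((hasDerivAt_const a b).prodMk (hasDerivAt_const a c))
  exact (hg.hasFDerivAt.comp_hasDerivAt a hl).deriv

lemma pd2_eq_fderiv {g : ℝ × ℝ × ℝ → ℝ} {a b c : ℝ}
    (hg : DifferentiableAt ℝ g (a, b, c)) :
    pd2 g (a, b, c) = fderiv ℝ g (a, b, c) (0, 1, 0) := by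
  have hl : HasDerivAt (fun s : ℝ => (a, s, c)) ((0:ℝ), (1:ℝ), (0:ℝ)) b :=
    (hasDerivAt_const b a).prodMk ((hasDerivAt_id b).prodMk (hasDerivAt_const b c))
  exact (hg.hasFDerivAt.comp_hasDerivAt b hl).deriv

lemma pdu_eq_fderiv {g : ℝ × ℝ × ℝ → ℝ} {a b c : ℝ}
    (hg : DifferentiableAt ℝ g (a, b, c)) :
    pdu g (a, b, c) = fderiv ℝ g (a, b, c) (0, 0, 1) := by
  have hl : HasDerivAt (fun s : ℝ => (a, b, s)) ((0:ℝ), (0:ℝ), (1:ℝ)) c :=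
    (hasDerivAt_const c a).prodMk ((hasDerivAt_const c b).prodMk (hasDerivAt_id c))
  exact (hg.hasFDerivAt.comp_hasDerivAt c hl).deriv

lemma hasDerivAt_comp3 {g : ℝ × ℝ × ℝ → ℝ} {a b c : ℝ}
    (hg : DifferentiableAt ℝ g (a, b, c))
    {α β γ : ℝ → ℝ} {α' β' γ' t : ℝ}
    (hα : HasDerivAt α α' t) (hβ : HasDerivAt β β' t) (hγ : HasDerivAt γ γ' t)
    (ha : α t = a) (hb : β t = b) (hc : γ t = c) :
    HasDerivAt (fun s => g (α s, β s, γ s))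
      (α' * pd1 g (a, b, c) + β' * pd2 g (a, b, c) + γ' * pdu g (a, b, c)) t := by
  have hφ : HasDerivAt (fun s => (α s, β s, γ s)) (α', β', γ') t := hα.prodMk (hβ.prodMk hγ)
  have hptq : (α t, β t, γ t) = (a, b, c) := by rw [ha, hb, hc]
  have hg' : HasFDerivAt g (fderiv ℝ g (a, b, c)) (α t, β t, γ t) := by
    rw [hptq]; exact hg.hasFDerivAt
  have hcomp := hg'.comp_hasDerivAt t hφ
  have hvec : (α', β', γ') = α' • ((1:ℝ), (0:ℝ), (0:ℝ)) + β' • ((0:ℝ), (1:ℝ), (0:ℝ))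
      + γ' • ((0:ℝ), (0:ℝ), (1:ℝ)) := by simp [Prod.ext_iff]
  have : fderiv ℝ g (a, b, c) (α', β', γ')
      = α' * pd1 g (a, b, c) + β' * pd2 g (a, b, c) + γ' * pdu g (a, b, c) := by
    rw [hvec, map_add, map_add, map_smul, map_smul, map_smul,
      pd1_eq_fderiv hg, pd2_eq_fderiv hg, pdu_eq_fderiv hg]
    simp [smul_eq_mul]
  rwa [this] at hcomp

lemma hasDerivAt_slice1 {g : ℝ × ℝ × ℝ → ℝ} {a b c : ℝ}
    (hg : DifferentiableAt ℝ g (a, b, c)) :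
    HasDerivAt (fun s => g (s, b, c)) (pd1 g (a, b, c)) a := by
  have := hasDerivAt_comp3 hg (hasDerivAt_id a) (hasDerivAt_const a b)
    (hasDerivAt_const a c) rfl rfl rfl
  simpa using this

lemma hasDerivAt_slice2 {g : ℝ × ℝ × ℝ → ℝ} {a b c : ℝ}
    (hg : DifferentiableAt ℝ g (a, b, c)) :
    HasDerivAt (fun s => g (a, s, c)) (pd2 g (a, b, c)) b := by
  have := hasDerivAt_comp3 hg (hasDerivAt_const b a) (hasDerivAt_id b)
    (hasDerivAt_const b c) rfl rfl rfl
  simpa using this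

lemma hasDerivAt_sliceu {g : ℝ × ℝ × ℝ → ℝ} {a b c : ℝ}
    (hg : DifferentiableAt ℝ g (a, b, c)) :
    HasDerivAt (fun s => g (a, b, s)) (pdu g (a, b, c)) c := by
  have := hasDerivAt_comp3 hg (hasDerivAt_const c a) (hasDerivAt_const c b)
    (hasDerivAt_id c) rfl rfl rfl
  simpa using this

/-- Corollary 9: composing the Bäcklund transformation `ζ = −Φ₂/Φᵤ`, `ζ* = −Φ₁/Φᵤ`
with the hodograph transformation `κ = Φ(x,u)` reduces the determining equation (6)
to the wave equation: if `Φ₂ + ζΦᵤ = 0`, `Φ₁ + ζ*Φᵤ = 0` (with `ζ* = (F(u) − ζ₁)/ζᵤ`)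
and `Φ(x,ũ(x,κ)) = κ`, then `∂₁ũ = ζ*(x,ũ)`, `∂₂ũ = ζ(x,ũ)`, `∂_κũ = 1/Φᵤ(x,ũ) ≠ 0`,
and each `ũ(·,κ)` solves `∂₁∂₂u = F(u)`. -/
theorem hodograph_reduces_eq6_to_wave
    (F : ℝ → ℝ) (hF : ContDiff ℝ (⊤ : ℕ∞) F)
    (Ω : Set (ℝ × ℝ × ℝ)) (hΩ : IsOpen Ω)
    (ζ : ℝ × ℝ × ℝ → ℝ) (hζ : ContDiffOn ℝ (⊤ : ℕ∞) ζ Ω)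
    (hζu : ∀ p ∈ Ω, pdu ζ p ≠ 0)
    (Φ : ℝ × ℝ × ℝ → ℝ) (hΦ : ContDiffOn ℝ (⊤ : ℕ∞) Φ Ω)
    (hΦu : ∀ p ∈ Ω, pdu Φ p ≠ 0)
    (hΦ2 : ∀ p ∈ Ω, pd2 Φ p + ζ p * pdu Φ p = 0)
    (hΦ1 : ∀ p ∈ Ω,
      pd1 Φ p + (F p.2.2 - pd1 ζ p) / pdu ζ p * pdu Φ p = 0)
    (S : Set (ℝ × ℝ × ℝ)) (hS : IsOpen S)  -- the domain of `ũ (x₁, x₂, κ)`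
    (ut : ℝ × ℝ × ℝ → ℝ) (hut : ContDiffOn ℝ (⊤ : ℕ∞) ut S)
    (hmem : ∀ p ∈ S, (p.1, p.2.1, ut p) ∈ Ω)
    (hΦeq : ∀ p ∈ S, Φ (p.1, p.2.1, ut p) = p.2.2) :
    (∀ p ∈ S, pd1 ut p
        = (F (ut p) - pd1 ζ (p.1, p.2.1, ut p)) / pdu ζ (p.1, p.2.1, ut p)) ∧
    (∀ p ∈ S, pd2 ut p = ζ (p.1, p.2.1, ut p)) ∧
    (∀ p ∈ S, pdu ut p = 1 / pdu Φ (p.1, p.2.1, ut p) ∧ pdu ut p ≠ 0) ∧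
    (∀ p ∈ S, d1 (d2 fun x : ℝ × ℝ => ut (x.1, x.2, p.2.2)) (p.1, p.2.1) = F (ut p)) := by
  have hutd : ∀ p ∈ S, DifferentiableAt ℝ ut p := fun p hp =>
    (hut.differentiableOn (by simp)).differentiableAt (hS.mem_nhds hp)
  have hΦd : ∀ q ∈ Ω, DifferentiableAt ℝ Φ q := fun q hq =>
    (hΦ.differentiableOn (by simp)).differentiableAt (hΩ.mem_nhds hq)
  have hζd : ∀ q ∈ Ω, DifferentiableAt ℝ ζ q := fun q hq =>
    (hζ.differentiableOn (by simp)).differentiableAt (hΩ.mem_nhds hq)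
  -- relation from differentiating Φ(s, x₂, ũ(s,x₂,κ)) = κ in x₁
  have key1 : ∀ p ∈ S, pd1 Φ (p.1, p.2.1, ut p)
      + pd1 ut p * pdu Φ (p.1, p.2.1, ut p) = 0 := by
    intro p hp
    obtain ⟨x₁, x₂, κ⟩ := p
    have hq := hmem _ hp
    have hγ : HasDerivAt (fun s => ut (s, x₂, κ)) (pd1 ut (x₁, x₂, κ)) x₁ :=
      hasDerivAt_slice1 (hutd _ hp)
    have hD := hasDerivAt_comp3 (hΦd _ hq) (hasDerivAt_id x₁)
      (hasDerivAt_const x₁ x₂) hγ rfl rfl rfl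
    simp only [id_eq] at hD
    have hev : ∀ᶠ s in nhds x₁, (s, x₂, κ) ∈ S := by
      have hc : Continuous fun s : ℝ => (s, x₂, κ) := by fun_prop
      exact hc.continuousAt.preimage_mem_nhds (hS.mem_nhds hp)
    have heq : (fun s => Φ (s, x₂, ut (s, x₂, κ))) =ᶠ[nhds x₁] fun _ => κ := by
      filter_upwards [hev] with s hs using hΦeq _ hs
    have h0 : deriv (fun s => Φ (s, x₂, ut (s, x₂, κ))) x₁ = 0 := by
      rw [heq.deriv_eq]; simp
    have hD' := hD.deriv
    rw [h0] at hD'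
    simp only at hD' ⊢
    linarith
  have key2 : ∀ p ∈ S, pd2 Φ (p.1, p.2.1, ut p)
      + pd2 ut p * pdu Φ (p.1, p.2.1, ut p) = 0 := by
    intro p hp
    obtain ⟨x₁, x₂, κ⟩ := p
    have hq := hmem _ hp
    have hγ : HasDerivAt (fun s => ut (x₁, s, κ)) (pd2 ut (x₁, x₂, κ)) x₂ :=
      hasDerivAt_slice2 (hutd _ hp)
    have hD := hasDerivAt_comp3 (hΦd _ hq) (hasDerivAt_const x₂ x₁)
      (hasDerivAt_id x₂) hγ rfl rfl rfl
    simp only [id_eq] at hD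
    have hev : ∀ᶠ s in nhds x₂, (x₁, s, κ) ∈ S := by
      have hc : Continuous fun s : ℝ => ((x₁ : ℝ), s, κ) := by fun_prop
      exact hc.continuousAt.preimage_mem_nhds (hS.mem_nhds hp)
    have heq : (fun s => Φ (x₁, s, ut (x₁, s, κ))) =ᶠ[nhds x₂] fun _ => κ := by
      filter_upwards [hev] with s hs using hΦeq _ hs
    have h0 : deriv (fun s => Φ (x₁, s, ut (x₁, s, κ))) x₂ = 0 := by
      rw [heq.deriv_eq]; simp
    have hD' := hD.deriv
    rw [h0] at hD'
    simp only at hD' ⊢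
    linarith
  have key3 : ∀ p ∈ S, pdu ut p * pdu Φ (p.1, p.2.1, ut p) = 1 := by
    intro p hp
    obtain ⟨x₁, x₂, κ⟩ := p
    have hq := hmem _ hp
    have hγ : HasDerivAt (fun s => ut (x₁, x₂, s)) (pdu ut (x₁, x₂, κ)) κ :=
      hasDerivAt_sliceu (hutd _ hp)
    have hD := hasDerivAt_comp3 (hΦd _ hq) (hasDerivAt_const κ x₁)
      (hasDerivAt_const κ x₂) hγ rfl rfl rfl
    have hev : ∀ᶠ s in nhds κ, (x₁, x₂, s) ∈ S := by
      have hc : Continuous fun s : ℝ => ((x₁ : ℝ), x₂, s) := by fun_prop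
      exact hc.continuousAt.preimage_mem_nhds (hS.mem_nhds hp)
    have heq : (fun s => Φ (x₁, x₂, ut (x₁, x₂, s))) =ᶠ[nhds κ] fun s => s := by
      filter_upwards [hev] with s hs using hΦeq _ hs
    have h0 : deriv (fun s => Φ (x₁, x₂, ut (x₁, x₂, s))) κ = 1 := by
      rw [heq.deriv_eq]; simp
    have hD' := hD.deriv
    rw [h0] at hD'
    simp only at hD' ⊢
    linarith
  have stmt1 : ∀ p ∈ S, pd1 ut p
      = (F (ut p) - pd1 ζ (p.1, p.2.1, ut p)) / pdu ζ (p.1, p.2.1, ut p) := by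
    intro p hp
    have hq := hmem _ hp
    have h1 := hΦ1 _ hq
    have h2 := key1 _ hp
    have hne := hΦu _ hq
    simp only at h1
    apply mul_right_cancel₀ hne
    linarith
  have stmt2 : ∀ p ∈ S, pd2 ut p = ζ (p.1, p.2.1, ut p) := by
    intro p hp
    have hq := hmem _ hp
    have h1 := hΦ2 _ hq
    have h2 := key2 _ hp
    have hne := hΦu _ hq
    apply mul_right_cancel₀ hne
    linarith
  have stmt3 : ∀ p ∈ S, pdu ut p = 1 / pdu Φ (p.1, p.2.1, ut p) ∧ pdu ut p ≠ 0 := by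
    intro p hp
    have h := key3 _ hp
    have hne := hΦu _ (hmem _ hp)
    constructor
    · field_simp
      linarith
    · intro h0
      rw [h0, zero_mul] at h
      exact one_ne_zero h.symm
  refine ⟨stmt1, stmt2, stmt3, ?_⟩
  intro p hp
  obtain ⟨x₁, x₂, κ⟩ := p
  have hq := hmem _ hp
  have hζune := hζu _ hq
  -- inner derivative: d2 of the slice equals ζ near x₁
  have hev : ∀ᶠ s in nhds x₁, (s, x₂, κ) ∈ S := by
    have hc : Continuous fun s : ℝ => (s, x₂, κ) := by fun_prop
    exact hc.continuousAt.preimage_mem_nhds (hS.mem_nhds hp)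
  have heq : (fun s => d2 (fun x : ℝ × ℝ => ut (x.1, x.2, κ)) (s, x₂))
      =ᶠ[nhds x₁] fun s => ζ (s, x₂, ut (s, x₂, κ)) := by
    filter_upwards [hev] with s hs
    have : d2 (fun x : ℝ × ℝ => ut (x.1, x.2, κ)) (s, x₂) = pd2 ut (s, x₂, κ) := rfl
    rw [this]
    exact stmt2 _ hs
  have hγ : HasDerivAt (fun s => ut (s, x₂, κ)) (pd1 ut (x₁, x₂, κ)) x₁ :=
    hasDerivAt_slice1 (hutd _ hp)
  have hD := hasDerivAt_comp3 (hζd _ hq) (hasDerivAt_id x₁)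
    (hasDerivAt_const x₁ x₂) hγ rfl rfl rfl
  simp only [id_eq] at hD
  have hfinal : d1 (d2 fun x : ℝ × ℝ => ut (x.1, x.2, κ)) (x₁, x₂)
      = deriv (fun s => ζ (s, x₂, ut (s, x₂, κ))) x₁ := heq.deriv_eq
  rw [hfinal, hD.deriv]
  have h1 := stmt1 _ hp
  simp only at h1 ⊢
  rw [h1]
  field_simp
  ring
end

section
/- Let Ω ⊆ ℝ³ be open with coordinates (x₁,x₂,u), let ξ : Ω → ℝ be smooth, and let Φ : Ω → ℝ be smooth with Φᵤ nowhere zero. Define G := −Φ₁/Φᵤ and ζ := −(ξΦ₁ + Φ₂)/Φᵤ on Ω. Then ξ, ζ, G satisfy equation (8) identically on Ω: ζ₁ + ζᵤG − (ξ₁ + ξᵤG)G = ξG₁ + G₂ + ζGᵤ. Moreover, if f = f(x,κ) is smooth with ∂_κ f nowhere zero and Φ(x,f(x,κ)) = κ, then every member of the family satisfies ∂₁f = G(x,f) and ξ(x,f)∂₁f + ∂₂f = ζ(x,f), i.e., it is invariant under the vector field Q^ζ = ξ∂₁ + ∂₂ + ζ∂ᵤ. -/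
open Topology

/-- auxiliary: derivative along the first coordinate line. -/
lemma aux_hasDerivAt1 (f : ℝ × ℝ × ℝ → ℝ) (p : ℝ × ℝ × ℝ)
    (hf : DifferentiableAt ℝ f p) :
    HasDerivAt (fun s => f (s, p.2.1, p.2.2)) (fderiv ℝ f p (1, 0, 0)) p.1 := by
  have hl : HasDerivAt (fun s : ℝ => ((s, p.2.1, p.2.2) : ℝ × ℝ × ℝ)) ((1 : ℝ), (0:ℝ), (0:ℝ)) p.1 :=
    (hasDerivAt_id p.1).prodMk (hasDerivAt_const _ _)
  exact hf.hasFDerivAt.comp_hasDerivAt p.1 hl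

lemma aux_hasDerivAt2 (f : ℝ × ℝ × ℝ → ℝ) (p : ℝ × ℝ × ℝ)
    (hf : DifferentiableAt ℝ f p) :
    HasDerivAt (fun s => f (p.1, s, p.2.2)) (fderiv ℝ f p (0, 1, 0)) p.2.1 := by
  have hl : HasDerivAt (fun s : ℝ => ((p.1, s, p.2.2) : ℝ × ℝ × ℝ)) ((0 : ℝ), (1:ℝ), (0:ℝ)) p.2.1 :=
    (hasDerivAt_const _ _).prodMk ((hasDerivAt_id p.2.1).prodMk (hasDerivAt_const _ _))
  exact hf.hasFDerivAt.comp_hasDerivAt p.2.1 hl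

lemma aux_hasDerivAtu (f : ℝ × ℝ × ℝ → ℝ) (p : ℝ × ℝ × ℝ)
    (hf : DifferentiableAt ℝ f p) :
    HasDerivAt (fun s => f (p.1, p.2.1, s)) (fderiv ℝ f p (0, 0, 1)) p.2.2 := by
  have hl : HasDerivAt (fun s : ℝ => ((p.1, p.2.1, s) : ℝ × ℝ × ℝ)) ((0 : ℝ), (0:ℝ), (1:ℝ)) p.2.2 :=
    (hasDerivAt_const _ _).prodMk ((hasDerivAt_const _ _).prodMk (hasDerivAt_id p.2.2))
  exact hf.hasFDerivAt.comp_hasDerivAt p.2.2 hl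

lemma aux_pd1_congr {f g : ℝ × ℝ × ℝ → ℝ} {p : ℝ × ℝ × ℝ} (h : f =ᶠ[𝓝 p] g) :
    pd1 f p = pd1 g p := by
  apply Filter.EventuallyEq.deriv_eq
  have hc : ContinuousAt (fun s : ℝ => ((s, p.2.1, p.2.2) : ℝ × ℝ × ℝ)) p.1 := by fun_prop
  exact hc.preimage_mem_nhds h

lemma aux_pd2_congr {f g : ℝ × ℝ × ℝ → ℝ} {p : ℝ × ℝ × ℝ} (h : f =ᶠ[𝓝 p] g) :
    pd2 f p = pd2 g p := by
  apply Filter.EventuallyEq.deriv_eq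
  have hc : ContinuousAt (fun s : ℝ => ((p.1, s, p.2.2) : ℝ × ℝ × ℝ)) p.2.1 := by fun_prop
  exact hc.preimage_mem_nhds h

lemma aux_pdu_congr {f g : ℝ × ℝ × ℝ → ℝ} {p : ℝ × ℝ × ℝ} (h : f =ᶠ[𝓝 p] g) :
    pdu f p = pdu g p := by
  apply Filter.EventuallyEq.deriv_eq
  have hc : ContinuousAt (fun s : ℝ => ((p.1, p.2.1, s) : ℝ × ℝ × ℝ)) p.2.2 := by fun_prop
  exact hc.preimage_mem_nhds h

/-- smoothness of directional derivative functions on an open set. -/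
lemma aux_dirderiv_contDiffOn {Ω : Set (ℝ × ℝ × ℝ)} (hΩ : IsOpen Ω)
    {Φ : ℝ × ℝ × ℝ → ℝ} (hΦ : ContDiffOn ℝ (⊤ : ℕ∞) Φ Ω) (v : ℝ × ℝ × ℝ) :
    ContDiffOn ℝ (⊤ : ℕ∞) (fun q => fderiv ℝ Φ q v) Ω :=
  (hΦ.fderiv_of_isOpen hΩ (by simp)).clm_apply contDiffOn_const

lemma aux_hasFDerivAt_dirderiv {Ω : Set (ℝ × ℝ × ℝ)} (hΩ : IsOpen Ω)
    {Φ : ℝ × ℝ × ℝ → ℝ} (hΦ : ContDiffOn ℝ (⊤ : ℕ∞) Φ Ω) {p : ℝ × ℝ × ℝ} (hp : p ∈ Ω)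
    (v : ℝ × ℝ × ℝ) :
    HasFDerivAt (fun q => fderiv ℝ Φ q v)
      ((ContinuousLinearMap.apply ℝ ℝ v).comp (fderiv ℝ (fderiv ℝ Φ) p)) p := by
  have hD : DifferentiableAt ℝ (fderiv ℝ Φ) p :=
    (((hΦ.fderiv_of_isOpen (m := (⊤ : ℕ∞)) hΩ (by simp)).differentiableOn (by simp)).differentiableAt
      (hΩ.mem_nhds hp))
  exact (ContinuousLinearMap.apply ℝ ℝ v).hasFDerivAt.comp p hD.hasFDerivAt

/-- symmetry of the second derivative at points of an open set. -/
lemma aux_symm {Ω : Set (ℝ × ℝ × ℝ)} (hΩ : IsOpen Ω)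
    {Φ : ℝ × ℝ × ℝ → ℝ} (hΦ : ContDiffOn ℝ (⊤ : ℕ∞) Φ Ω) {p : ℝ × ℝ × ℝ} (hp : p ∈ Ω)
    (v w : ℝ × ℝ × ℝ) :
    fderiv ℝ (fderiv ℝ Φ) p v w = fderiv ℝ (fderiv ℝ Φ) p w v := by
  have hD : DifferentiableAt ℝ (fderiv ℝ Φ) p :=
    (((hΦ.fderiv_of_isOpen (m := (⊤ : ℕ∞)) hΩ (by simp)).differentiableOn (by simp)).differentiableAt
      (hΩ.mem_nhds hp))
  have hf : ∀ᶠ y in 𝓝 p, HasFDerivAt Φ (fderiv ℝ Φ y) y := by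
    filter_upwards [hΩ.mem_nhds hp] with y hy
    exact ((hΦ.differentiableOn (by simp)).differentiableAt (hΩ.mem_nhds hy)).hasFDerivAt
  exact second_derivative_symmetric_of_eventually hf hD.hasFDerivAt v w

lemma aux_hasDerivAt1' (f : ℝ × ℝ × ℝ → ℝ) (p : ℝ × ℝ × ℝ) (hf : DifferentiableAt ℝ f p) :
    HasDerivAt (fun s => f (s, p.2.1, p.2.2)) (pd1 f p) p.1 := by
  have h := aux_hasDerivAt1 f p hf
  rwa [show pd1 f p = fderiv ℝ f p (1,0,0) from h.deriv]

lemma aux_hasDerivAt2' (f : ℝ × ℝ × ℝ → ℝ) (p : ℝ × ℝ × ℝ) (hf : DifferentiableAt ℝ f p) :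
    HasDerivAt (fun s => f (p.1, s, p.2.2)) (pd2 f p) p.2.1 := by
  have h := aux_hasDerivAt2 f p hf
  rwa [show pd2 f p = fderiv ℝ f p (0,1,0) from h.deriv]

lemma aux_hasDerivAtu' (f : ℝ × ℝ × ℝ → ℝ) (p : ℝ × ℝ × ℝ) (hf : DifferentiableAt ℝ f p) :
    HasDerivAt (fun s => f (p.1, p.2.1, s)) (pdu f p) p.2.2 := by
  have h := aux_hasDerivAtu f p hf
  rwa [show pdu f p = fderiv ℝ f p (0,0,1) from h.deriv]

lemma aux_pd1_dirderiv {Ω : Set (ℝ × ℝ × ℝ)} (hΩ : IsOpen Ω)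
    {Φ : ℝ × ℝ × ℝ → ℝ} (hΦ : ContDiffOn ℝ (⊤ : ℕ∞) Φ Ω) {p : ℝ × ℝ × ℝ} (hp : p ∈ Ω)
    (v : ℝ × ℝ × ℝ) :
    pd1 (fun q => fderiv ℝ Φ q v) p = fderiv ℝ (fderiv ℝ Φ) p (1,0,0) v := by
  have h := aux_hasFDerivAt_dirderiv hΩ hΦ hp v
  rw [show pd1 (fun q => fderiv ℝ Φ q v) p
      = fderiv ℝ (fun q => fderiv ℝ Φ q v) p (1,0,0) from
    (aux_hasDerivAt1 _ p h.differentiableAt).deriv, h.fderiv]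
  rfl

lemma aux_pd2_dirderiv {Ω : Set (ℝ × ℝ × ℝ)} (hΩ : IsOpen Ω)
    {Φ : ℝ × ℝ × ℝ → ℝ} (hΦ : ContDiffOn ℝ (⊤ : ℕ∞) Φ Ω) {p : ℝ × ℝ × ℝ} (hp : p ∈ Ω)
    (v : ℝ × ℝ × ℝ) :
    pd2 (fun q => fderiv ℝ Φ q v) p = fderiv ℝ (fderiv ℝ Φ) p (0,1,0) v := by
  have h := aux_hasFDerivAt_dirderiv hΩ hΦ hp v
  rw [show pd2 (fun q => fderiv ℝ Φ q v) p
      = fderiv ℝ (fun q => fderiv ℝ Φ q v) p (0,1,0) from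
    (aux_hasDerivAt2 _ p h.differentiableAt).deriv, h.fderiv]
  rfl

lemma aux_pdu_dirderiv {Ω : Set (ℝ × ℝ × ℝ)} (hΩ : IsOpen Ω)
    {Φ : ℝ × ℝ × ℝ → ℝ} (hΦ : ContDiffOn ℝ (⊤ : ℕ∞) Φ Ω) {p : ℝ × ℝ × ℝ} (hp : p ∈ Ω)
    (v : ℝ × ℝ × ℝ) :
    pdu (fun q => fderiv ℝ Φ q v) p = fderiv ℝ (fderiv ℝ Φ) p (0,0,1) v := by
  have h := aux_hasFDerivAt_dirderiv hΩ hΦ hp v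
  rw [show pdu (fun q => fderiv ℝ Φ q v) p
      = fderiv ℝ (fun q => fderiv ℝ Φ q v) p (0,0,1) from
    (aux_hasDerivAtu _ p h.differentiableAt).deriv, h.fderiv]
  rfl

/-- The Bäcklund-transformation content of Theorem 7 and Corollary 14: for any `Φ`
with `Φᵤ ≠ 0`, the functions `G := −Φ₁/Φᵤ` and `ζ := −(ξΦ₁ + Φ₂)/Φᵤ` satisfy the
determining equation (8); and any one-parametric family `u = f(x,κ)` with `f_κ ≠ 0`
encoded by `Φ` via `κ = Φ(x,u)` consists of functions invariant under the vector
field `Q^ζ = ξ∂₁ + ∂₂ + ζ∂ᵤ`, i.e. satisfying `∂₁f = G(x,f)` and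
`ξ(x,f)∂₁f + ∂₂f = ζ(x,f)`. -/
theorem backlund_gives_eq8_and_invariance
    (Ω : Set (ℝ × ℝ × ℝ)) (hΩ : IsOpen Ω)
    (ξ : ℝ × ℝ × ℝ → ℝ) (hξ : ContDiffOn ℝ (⊤ : ℕ∞) ξ Ω)
    (Φ : ℝ × ℝ × ℝ → ℝ) (hΦ : ContDiffOn ℝ (⊤ : ℕ∞) Φ Ω)
    (hΦu : ∀ p ∈ Ω, pdu Φ p ≠ 0) :
    (∀ p ∈ Ω,
      pd1 (fun q => -(ξ q * pd1 Φ q + pd2 Φ q) / pdu Φ q) p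
        + pdu (fun q => -(ξ q * pd1 Φ q + pd2 Φ q) / pdu Φ q) p
          * (-pd1 Φ p / pdu Φ p)
        - (pd1 ξ p + pdu ξ p * (-pd1 Φ p / pdu Φ p)) * (-pd1 Φ p / pdu Φ p)
      = ξ p * pd1 (fun q => -pd1 Φ q / pdu Φ q) p
        + pd2 (fun q => -pd1 Φ q / pdu Φ q) p
        + (-(ξ p * pd1 Φ p + pd2 Φ p) / pdu Φ p)
          * pdu (fun q => -pd1 Φ q / pdu Φ q) p) ∧
    (∀ (S : Set (ℝ × ℝ × ℝ)) (f : ℝ × ℝ × ℝ → ℝ),  -- `f (x₁, x₂, κ)`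
      IsOpen S → ContDiffOn ℝ (⊤ : ℕ∞) f S →
      (∀ p ∈ S, (p.1, p.2.1, f p) ∈ Ω) →
      (∀ p ∈ S, pdu f p ≠ 0) →
      (∀ p ∈ S, Φ (p.1, p.2.1, f p) = p.2.2) →
      (∀ p ∈ S,
        pd1 f p = -pd1 Φ (p.1, p.2.1, f p) / pdu Φ (p.1, p.2.1, f p) ∧
        ξ (p.1, p.2.1, f p) * pd1 f p + pd2 f p
          = -(ξ (p.1, p.2.1, f p) * pd1 Φ (p.1, p.2.1, f p)
              + pd2 Φ (p.1, p.2.1, f p)) / pdu Φ (p.1, p.2.1, f p))) := by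
  constructor
  · intro p hp
    have hΦdAt : ∀ r ∈ Ω, DifferentiableAt ℝ Φ r := fun r hr =>
      (hΦ.differentiableOn (by simp)).differentiableAt (hΩ.mem_nhds hr)
    have hξd : DifferentiableAt ℝ ξ p :=
      (hξ.differentiableOn (by simp)).differentiableAt (hΩ.mem_nhds hp)
    have hgd : ∀ v : ℝ × ℝ × ℝ, DifferentiableAt ℝ (fun q => fderiv ℝ Φ q v) p :=
      fun v => (aux_hasFDerivAt_dirderiv hΩ hΦ hp v).differentiableAt
    have ha : pd1 Φ p = fderiv ℝ Φ p (1,0,0) := (aux_hasDerivAt1 Φ p (hΦdAt p hp)).deriv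
    have hb : pd2 Φ p = fderiv ℝ Φ p (0,1,0) := (aux_hasDerivAt2 Φ p (hΦdAt p hp)).deriv
    have hc : pdu Φ p = fderiv ℝ Φ p (0,0,1) := (aux_hasDerivAtu Φ p (hΦdAt p hp)).deriv
    have hcne : fderiv ℝ Φ p (0,0,1) ≠ 0 := by rw [← hc]; exact hΦu p hp
    have hev_ζ : (fun q => -(ξ q * pd1 Φ q + pd2 Φ q) / pdu Φ q) =ᶠ[𝓝 p]
        (fun q => -(ξ q * fderiv ℝ Φ q (1,0,0) + fderiv ℝ Φ q (0,1,0)) / fderiv ℝ Φ q (0,0,1)) := by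
      filter_upwards [hΩ.mem_nhds hp] with r hr
      rw [show pd1 Φ r = fderiv ℝ Φ r (1,0,0) from (aux_hasDerivAt1 Φ r (hΦdAt r hr)).deriv,
        show pd2 Φ r = fderiv ℝ Φ r (0,1,0) from (aux_hasDerivAt2 Φ r (hΦdAt r hr)).deriv,
        show pdu Φ r = fderiv ℝ Φ r (0,0,1) from (aux_hasDerivAtu Φ r (hΦdAt r hr)).deriv]
    have hev_G : (fun q => -pd1 Φ q / pdu Φ q) =ᶠ[𝓝 p]
        (fun q => -fderiv ℝ Φ q (1,0,0) / fderiv ℝ Φ q (0,0,1)) := by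
      filter_upwards [hΩ.mem_nhds hp] with r hr
      rw [show pd1 Φ r = fderiv ℝ Φ r (1,0,0) from (aux_hasDerivAt1 Φ r (hΦdAt r hr)).deriv,
        show pdu Φ r = fderiv ℝ Φ r (0,0,1) from (aux_hasDerivAtu Φ r (hΦdAt r hr)).deriv]
    have hxi1 : HasDerivAt (fun s => ξ (s, p.2.1, p.2.2)) (pd1 ξ p) p.1 :=
      aux_hasDerivAt1' ξ p hξd
    have hxiu : HasDerivAt (fun s => ξ (p.1, p.2.1, s)) (pdu ξ p) p.2.2 :=
      aux_hasDerivAtu' ξ p hξd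
    have hL1g1 : HasDerivAt (fun s => fderiv ℝ Φ (s, p.2.1, p.2.2) (1,0,0))
        (fderiv ℝ (fderiv ℝ Φ) p (1,0,0) (1,0,0)) p.1 := by
      have h := aux_hasDerivAt1' (fun q => fderiv ℝ Φ q (1,0,0)) p (hgd (1,0,0))
      rwa [aux_pd1_dirderiv hΩ hΦ hp (1,0,0)] at h
    have hL1g2 : HasDerivAt (fun s => fderiv ℝ Φ (s, p.2.1, p.2.2) (0,1,0))
        (fderiv ℝ (fderiv ℝ Φ) p (1,0,0) (0,1,0)) p.1 := by
      have h := aux_hasDerivAt1' (fun q => fderiv ℝ Φ q (0,1,0)) p (hgd (0,1,0))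
      rwa [aux_pd1_dirderiv hΩ hΦ hp (0,1,0)] at h
    have hL1gu : HasDerivAt (fun s => fderiv ℝ Φ (s, p.2.1, p.2.2) (0,0,1))
        (fderiv ℝ (fderiv ℝ Φ) p (1,0,0) (0,0,1)) p.1 := by
      have h := aux_hasDerivAt1' (fun q => fderiv ℝ Φ q (0,0,1)) p (hgd (0,0,1))
      rwa [aux_pd1_dirderiv hΩ hΦ hp (0,0,1)] at h
    have hL2g1 : HasDerivAt (fun s => fderiv ℝ Φ (p.1, s, p.2.2) (1,0,0))
        (fderiv ℝ (fderiv ℝ Φ) p (0,1,0) (1,0,0)) p.2.1 := by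
      have h := aux_hasDerivAt2' (fun q => fderiv ℝ Φ q (1,0,0)) p (hgd (1,0,0))
      rwa [aux_pd2_dirderiv hΩ hΦ hp (1,0,0)] at h
    have hL2gu : HasDerivAt (fun s => fderiv ℝ Φ (p.1, s, p.2.2) (0,0,1))
        (fderiv ℝ (fderiv ℝ Φ) p (0,1,0) (0,0,1)) p.2.1 := by
      have h := aux_hasDerivAt2' (fun q => fderiv ℝ Φ q (0,0,1)) p (hgd (0,0,1))
      rwa [aux_pd2_dirderiv hΩ hΦ hp (0,0,1)] at h
    have hLug1 : HasDerivAt (fun s => fderiv ℝ Φ (p.1, p.2.1, s) (1,0,0))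
        (fderiv ℝ (fderiv ℝ Φ) p (0,0,1) (1,0,0)) p.2.2 := by
      have h := aux_hasDerivAtu' (fun q => fderiv ℝ Φ q (1,0,0)) p (hgd (1,0,0))
      rwa [aux_pdu_dirderiv hΩ hΦ hp (1,0,0)] at h
    have hLug2 : HasDerivAt (fun s => fderiv ℝ Φ (p.1, p.2.1, s) (0,1,0))
        (fderiv ℝ (fderiv ℝ Φ) p (0,0,1) (0,1,0)) p.2.2 := by
      have h := aux_hasDerivAtu' (fun q => fderiv ℝ Φ q (0,1,0)) p (hgd (0,1,0))
      rwa [aux_pdu_dirderiv hΩ hΦ hp (0,1,0)] at h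
    have hLugu : HasDerivAt (fun s => fderiv ℝ Φ (p.1, p.2.1, s) (0,0,1))
        (fderiv ℝ (fderiv ℝ Φ) p (0,0,1) (0,0,1)) p.2.2 := by
      have h := aux_hasDerivAtu' (fun q => fderiv ℝ Φ q (0,0,1)) p (hgd (0,0,1))
      rwa [aux_pdu_dirderiv hΩ hΦ hp (0,0,1)] at h
    have Hζ1 : pd1 (fun q => -(ξ q * fderiv ℝ Φ q (1,0,0) + fderiv ℝ Φ q (0,1,0)) / fderiv ℝ Φ q (0,0,1)) p
        = ((-(pd1 ξ p * (fderiv ℝ Φ p (1,0,0)) + ξ p * (fderiv ℝ (fderiv ℝ Φ) p (1,0,0) (1,0,0)) + fderiv ℝ (fderiv ℝ Φ) p (1,0,0) (0,1,0))) * (fderiv ℝ Φ p (0,0,1))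
            - (-(ξ p * (fderiv ℝ Φ p (1,0,0)) + fderiv ℝ Φ p (0,1,0))) * (fderiv ℝ (fderiv ℝ Φ) p (1,0,0) (0,0,1))) / (fderiv ℝ Φ p (0,0,1)) ^ 2 :=
      (((hxi1.mul hL1g1).add hL1g2).neg.div hL1gu hcne).deriv
    have Hζu : pdu (fun q => -(ξ q * fderiv ℝ Φ q (1,0,0) + fderiv ℝ Φ q (0,1,0)) / fderiv ℝ Φ q (0,0,1)) p
        = ((-(pdu ξ p * (fderiv ℝ Φ p (1,0,0)) + ξ p * (fderiv ℝ (fderiv ℝ Φ) p (0,0,1) (1,0,0)) + fderiv ℝ (fderiv ℝ Φ) p (0,0,1) (0,1,0))) * (fderiv ℝ Φ p (0,0,1))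
            - (-(ξ p * (fderiv ℝ Φ p (1,0,0)) + fderiv ℝ Φ p (0,1,0))) * (fderiv ℝ (fderiv ℝ Φ) p (0,0,1) (0,0,1))) / (fderiv ℝ Φ p (0,0,1)) ^ 2 :=
      (((hxiu.mul hLug1).add hLug2).neg.div hLugu hcne).deriv
    have HG1 : pd1 (fun q => -fderiv ℝ Φ q (1,0,0) / fderiv ℝ Φ q (0,0,1)) p
        = ((-(fderiv ℝ (fderiv ℝ Φ) p (1,0,0) (1,0,0))) * (fderiv ℝ Φ p (0,0,1)) - (-(fderiv ℝ Φ p (1,0,0))) * (fderiv ℝ (fderiv ℝ Φ) p (1,0,0) (0,0,1))) / (fderiv ℝ Φ p (0,0,1)) ^ 2 :=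
      (hL1g1.neg.div hL1gu hcne).deriv
    have HG2 : pd2 (fun q => -fderiv ℝ Φ q (1,0,0) / fderiv ℝ Φ q (0,0,1)) p
        = ((-(fderiv ℝ (fderiv ℝ Φ) p (0,1,0) (1,0,0))) * (fderiv ℝ Φ p (0,0,1)) - (-(fderiv ℝ Φ p (1,0,0))) * (fderiv ℝ (fderiv ℝ Φ) p (0,1,0) (0,0,1))) / (fderiv ℝ Φ p (0,0,1)) ^ 2 :=
      (hL2g1.neg.div hL2gu hcne).deriv
    have HGu : pdu (fun q => -fderiv ℝ Φ q (1,0,0) / fderiv ℝ Φ q (0,0,1)) p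
        = ((-(fderiv ℝ (fderiv ℝ Φ) p (0,0,1) (1,0,0))) * (fderiv ℝ Φ p (0,0,1)) - (-(fderiv ℝ Φ p (1,0,0))) * (fderiv ℝ (fderiv ℝ Φ) p (0,0,1) (0,0,1))) / (fderiv ℝ Φ p (0,0,1)) ^ 2 :=
      (hLug1.neg.div hLugu hcne).deriv
    rw [aux_pd1_congr hev_ζ, aux_pdu_congr hev_ζ, aux_pd1_congr hev_G,
      aux_pd2_congr hev_G, aux_pdu_congr hev_G, Hζ1, Hζu, HG1, HG2, HGu, ha, hb, hc]
    rw [show fderiv ℝ (fderiv ℝ Φ) p (0,0,1) (1,0,0) = fderiv ℝ (fderiv ℝ Φ) p (1,0,0) (0,0,1) from aux_symm hΩ hΦ hp _ _,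
      show fderiv ℝ (fderiv ℝ Φ) p (0,0,1) (0,1,0) = fderiv ℝ (fderiv ℝ Φ) p (0,1,0) (0,0,1) from aux_symm hΩ hΦ hp _ _,
      show fderiv ℝ (fderiv ℝ Φ) p (0,1,0) (1,0,0) = fderiv ℝ (fderiv ℝ Φ) p (1,0,0) (0,1,0) from aux_symm hΩ hΦ hp _ _]
    field_simp
    ring
  · intro S f hS hf hmap _hfκ hΦf p hp
    set q : ℝ × ℝ × ℝ := (p.1, p.2.1, f p) with hqdef
    have hq : q ∈ Ω := hmap p hp
    have hΦd : DifferentiableAt ℝ Φ q :=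
      (hΦ.differentiableOn (by simp)).differentiableAt (hΩ.mem_nhds hq)
    have hfd : DifferentiableAt ℝ f p :=
      (hf.differentiableOn (by simp)).differentiableAt (hS.mem_nhds hp)
    have hA : pd1 Φ q = fderiv ℝ Φ q (1,0,0) := (aux_hasDerivAt1 Φ q hΦd).deriv
    have hB : pd2 Φ q = fderiv ℝ Φ q (0,1,0) := (aux_hasDerivAt2 Φ q hΦd).deriv
    have hC : pdu Φ q = fderiv ℝ Φ q (0,0,1) := (aux_hasDerivAtu Φ q hΦd).deriv
    have hCne : pdu Φ q ≠ 0 := hΦu q hq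
    have hdec1 : ∀ t : ℝ, fderiv ℝ Φ q ((1:ℝ),(0:ℝ),t)
        = fderiv ℝ Φ q (1,0,0) + t * fderiv ℝ Φ q (0,0,1) := by
      intro t
      have h : ((1:ℝ),(0:ℝ),t) = ((1:ℝ),(0:ℝ),(0:ℝ)) + t • ((0:ℝ),(0:ℝ),(1:ℝ)) := by
        simp [Prod.ext_iff]
      rw [h, map_add, map_smul, smul_eq_mul]
    have hdec2 : ∀ t : ℝ, fderiv ℝ Φ q ((0:ℝ),(1:ℝ),t)
        = fderiv ℝ Φ q (0,1,0) + t * fderiv ℝ Φ q (0,0,1) := by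
      intro t
      have h : ((0:ℝ),(1:ℝ),t) = ((0:ℝ),(1:ℝ),(0:ℝ)) + t • ((0:ℝ),(0:ℝ),(1:ℝ)) := by
        simp [Prod.ext_iff]
      rw [h, map_add, map_smul, smul_eq_mul]
    -- x1 direction
    have hc1 : HasDerivAt (fun s => ((s, p.2.1, f (s, p.2.1, p.2.2)) : ℝ × ℝ × ℝ))
        ((1:ℝ), (0:ℝ), pd1 f p) p.1 :=
      (hasDerivAt_id p.1).prodMk ((hasDerivAt_const _ _).prodMk (aux_hasDerivAt1' f p hfd))
    have hΦc1 : HasDerivAt (fun s => Φ (s, p.2.1, f (s, p.2.1, p.2.2)))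
        (fderiv ℝ Φ q ((1:ℝ), (0:ℝ), pd1 f p)) p.1 :=
      hΦd.hasFDerivAt.comp_hasDerivAt p.1 hc1
    have hev1 : (fun s => Φ (s, p.2.1, f (s, p.2.1, p.2.2))) =ᶠ[𝓝 p.1]
        (fun _ => p.2.2) := by
      have hcont : ContinuousAt (fun s : ℝ => ((s, p.2.1, p.2.2) : ℝ × ℝ × ℝ)) p.1 := by
        fun_prop
      filter_upwards [hcont.preimage_mem_nhds (hS.mem_nhds hp)] with s hs
      exact hΦf (s, p.2.1, p.2.2) hs
    have hzero1 : fderiv ℝ Φ q ((1:ℝ), (0:ℝ), pd1 f p) = 0 :=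
      hΦc1.unique ((hasDerivAt_const p.1 p.2.2).congr_of_eventuallyEq hev1)
    have heq1 : pd1 Φ q + pd1 f p * pdu Φ q = 0 := by
      rw [hA, hC, ← hdec1]; exact hzero1
    -- x2 direction
    have hc2 : HasDerivAt (fun s => ((p.1, s, f (p.1, s, p.2.2)) : ℝ × ℝ × ℝ))
        ((0:ℝ), (1:ℝ), pd2 f p) p.2.1 :=
      (hasDerivAt_const _ _).prodMk ((hasDerivAt_id p.2.1).prodMk (aux_hasDerivAt2' f p hfd))
    have hΦc2 : HasDerivAt (fun s => Φ (p.1, s, f (p.1, s, p.2.2)))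
        (fderiv ℝ Φ q ((0:ℝ), (1:ℝ), pd2 f p)) p.2.1 :=
      hΦd.hasFDerivAt.comp_hasDerivAt p.2.1 hc2
    have hev2 : (fun s => Φ (p.1, s, f (p.1, s, p.2.2))) =ᶠ[𝓝 p.2.1]
        (fun _ => p.2.2) := by
      have hcont : ContinuousAt (fun s : ℝ => ((p.1, s, p.2.2) : ℝ × ℝ × ℝ)) p.2.1 := by
        fun_prop
      filter_upwards [hcont.preimage_mem_nhds (hS.mem_nhds hp)] with s hs
      exact hΦf (p.1, s, p.2.2) hs
    have hzero2 : fderiv ℝ Φ q ((0:ℝ), (1:ℝ), pd2 f p) = 0 :=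
      hΦc2.unique ((hasDerivAt_const p.2.1 p.2.2).congr_of_eventuallyEq hev2)
    have heq2 : pd2 Φ q + pd2 f p * pdu Φ q = 0 := by
      rw [hB, hC, ← hdec2]; exact hzero2
    constructor
    · field_simp
      linarith [heq1]
    · field_simp
      linear_combination (ξ q) * heq1 + heq2
end
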